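/- arXiv:math/0403104 — 6 statements merged into one kernel-verified Lean document; each statement's English description precedes it below -/
import Mathlib

section
/- Let P ⊆ ℝ^n be a convex set, X ⊆ P, and F a face of P. Then the map ψ_F sending Y to Y ∩ F is a surjective lattice homomorphism from Co(ℝ^n, X) to Co(ℝ^n, X ∩ F); i.e., ψ_F preserves the lattice operations A ∧ B = A ∩ B and A ∨ B = conv(A ∪ B) ∩ X (resp. ∩ (X ∩ F)), and every element of Co(ℝ^n, X ∩ F) is of the form Y ∩ F for some Y ∈ Co(ℝ^n, X). -/
/-- `Y` is a relatively convex subset of `X`: `Y = conv(Y) ∩ X`. -/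
def relConvex {n : ℕ} (X Y : Set (EuclideanSpace ℝ (Fin n))) : Prop :=
  Y = convexHull ℝ Y ∩ X

/-- The join in the lattice `Co(ℝ^n, X)`: `A ∨ B = conv(A ∪ B) ∩ X`. -/
def coJoin {n : ℕ} (X A B : Set (EuclideanSpace ℝ (Fin n))) : Set (EuclideanSpace ℝ (Fin n)) :=
  convexHull ℝ (A ∪ B) ∩ X

/-- `F` is a face of the convex set `P`. -/
def IsFaceOf {n : ℕ} (P F : Set (EuclideanSpace ℝ (Fin n))) : Prop :=
  F ⊆ P ∧ Convex ℝ F ∧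
    ∀ a ∈ P, ∀ b ∈ P, (openSegment ℝ a b ∩ F).Nonempty → segment ℝ a b ⊆ F

open Set

lemma face_key_finset {P F : Set (EuclideanSpace ℝ (Fin n))} (hP : Convex ℝ P)
    (hF : IsFaceOf P F) (t : Finset (EuclideanSpace ℝ (Fin n))) (ht : ↑t ⊆ P) :
    ∀ x ∈ convexHull ℝ (t : Set (EuclideanSpace ℝ (Fin n))), x ∈ F →
      x ∈ convexHull ℝ ((t : Set (EuclideanSpace ℝ (Fin n))) ∩ F) := by
  classical
  induction t using Finset.induction_on with
  | empty => simp
  | @insert a s ha ih =>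
    intro x hx hxF
    rcases s.eq_empty_or_nonempty with rfl | hs
    · simp only [Finset.insert_empty, Finset.coe_singleton, convexHull_singleton,
        mem_singleton_iff] at hx
      subst hx
      exact subset_convexHull ℝ _ ⟨by simp, hxF⟩
    · have hsP : (s : Set (EuclideanSpace ℝ (Fin n))) ⊆ P := fun z hz => ht (by simp [hz])
      have haP : a ∈ P := ht (by simp)
      rw [Finset.coe_insert, convexHull_insert (Finset.coe_nonempty.mpr hs)] at hx
      rw [mem_convexJoin] at hx
      obtain ⟨a', ha', y, hy, hxy⟩ := hx
      rw [mem_singleton_iff] at ha'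
      subst a'
      have hyP : y ∈ P := convexHull_min hsP hP hy
      rw [← insert_endpoints_openSegment] at hxy
      have sub : ∀ z ∈ F, z ∈ convexHull ℝ (s : Set (EuclideanSpace ℝ (Fin n))) →
          z ∈ convexHull ℝ (((insert a s : Finset _) : Set (EuclideanSpace ℝ (Fin n))) ∩ F) := by
        intro z hzF hzs
        refine convexHull_mono ?_ (ih hsP z hzs hzF)
        intro w hw
        exact ⟨by simp [hw.1], hw.2⟩
      rcases hxy with rfl | rfl | hxy
      · exact subset_convexHull ℝ _ ⟨by simp, hxF⟩
      · exact sub x hxF hy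
      · have hseg : segment ℝ a y ⊆ F := hF.2.2 a haP y hyP (⟨x, hxy, hxF⟩ : (openSegment ℝ a y ∩ F).Nonempty)
        have haF : a ∈ F := hseg (left_mem_segment ℝ a y)
        have hyF : y ∈ F := hseg (right_mem_segment ℝ a y)
        have ha' : a ∈ convexHull ℝ (((insert a s : Finset _) : Set (EuclideanSpace ℝ (Fin n))) ∩ F) :=
          subset_convexHull ℝ _ ⟨by simp, haF⟩
        exact (convex_convexHull ℝ _).segment_subset ha' (sub y hyF hy)
          (openSegment_subset_segment ℝ a y hxy)

lemma face_key {P F : Set (EuclideanSpace ℝ (Fin n))} (hP : Convex ℝ P)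
    (hF : IsFaceOf P F) {S : Set (EuclideanSpace ℝ (Fin n))} (hS : S ⊆ P) :
    convexHull ℝ S ∩ F ⊆ convexHull ℝ (S ∩ F) := by
  rintro x ⟨hx, hxF⟩
  rw [convexHull_eq_union_convexHull_finite_subsets] at hx
  simp only [Set.mem_iUnion, exists_prop] at hx
  obtain ⟨t, htS, hxt⟩ := hx
  exact convexHull_mono (inter_subset_inter_left _ htS)
    (face_key_finset hP hF t (htS.trans hS) x hxt hxF)

/-- Let `P ⊆ ℝ^n` be convex, `X ⊆ P`, and `F` a face of `P`. Then `Y ↦ Y ∩ F` is a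
surjective lattice homomorphism `Co(ℝ^n, X) → Co(ℝ^n, X ∩ F)`: it maps relatively convex
sets to relatively convex sets, is surjective, and preserves meets and joins. -/
theorem psiF_surjective_lattice_hom {n : ℕ} (P F X : Set (EuclideanSpace ℝ (Fin n)))
    (hP : Convex ℝ P) (hF : IsFaceOf P F) (hX : X ⊆ P) :
    (∀ Y, relConvex X Y → relConvex (X ∩ F) (Y ∩ F)) ∧
    (∀ Z, relConvex (X ∩ F) Z → ∃ Y, relConvex X Y ∧ Z = Y ∩ F) ∧
    (∀ A B, relConvex X A → relConvex X B → (A ∩ B) ∩ F = (A ∩ F) ∩ (B ∩ F)) ∧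
    (∀ A B, relConvex X A → relConvex X B →
      coJoin X A B ∩ F = coJoin (X ∩ F) (A ∩ F) (B ∩ F)) := by
  refine ⟨?_, ?_, ?_, ?_⟩
  · intro Y hY
    have hYX : Y ⊆ X := by rw [hY]; exact inter_subset_right
    apply Subset.antisymm
    · intro x hx
      exact ⟨subset_convexHull ℝ _ hx, hYX hx.1, hx.2⟩
    · rintro x ⟨hx1, hx2, hx3⟩
      have : x ∈ convexHull ℝ Y := convexHull_mono inter_subset_left hx1
      refine ⟨?_, hx3⟩
      rw [hY]; exact ⟨this, hx2⟩
  · intro Z hZ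
    refine ⟨convexHull ℝ Z ∩ X, ?_, ?_⟩
    · apply Subset.antisymm
      · intro x hx; exact ⟨subset_convexHull ℝ _ hx, hx.2⟩
      · rintro x ⟨hx1, hx2⟩
        have : convexHull ℝ (convexHull ℝ Z ∩ X) ⊆ convexHull ℝ Z :=
          convexHull_min inter_subset_left (convex_convexHull ℝ Z)
        exact ⟨this hx1, hx2⟩
    · rw [inter_assoc]; exact hZ
  · intro A B _ _
    ext x; constructor
    · rintro ⟨⟨h1, h2⟩, h3⟩; exact ⟨⟨h1, h3⟩, h2, h3⟩
    · rintro ⟨⟨h1, h3⟩, h2, _⟩; exact ⟨⟨h1, h2⟩, h3⟩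
  · intro A B hA hB
    have hAX : A ⊆ X := by rw [hA]; exact inter_subset_right
    have hBX : B ⊆ X := by rw [hB]; exact inter_subset_right
    have hABP : A ∪ B ⊆ P := (union_subset hAX hBX).trans hX
    apply Subset.antisymm
    · rintro x ⟨⟨hx1, hx2⟩, hx3⟩
      refine ⟨?_, hx2, hx3⟩
      have := face_key hP hF hABP ⟨hx1, hx3⟩
      rwa [union_inter_distrib_right] at this
    · rintro x ⟨hx1, hx2, hx3⟩
      refine ⟨⟨?_, hx2⟩, hx3⟩
      exact convexHull_mono (union_subset_union inter_subset_left inter_subset_left) hx1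
end

section
/- Let X = I_1 ∪ ... ∪ I_k ⊆ ℝ^n be a finite union of segments whose closures are pairwise disjoint (i.e., cl(I_s) ∩ cl(I_t) = ∅ for s ≠ t). Then the lattice Co(ℝ^n, X) of relatively convex subsets of X is join-semidistributive. -/
/-!
Write `X = ⋃ j, I j`, `J = conv (A ∪ B) ∩ X = conv (A ∪ C) ∩ X` and `G = A ∪ B ∩ C`; it suffices
to show `J ⊆ conv G`. As `X` is bounded, `K = closure (conv (A ∪ B))` is the convex hull of the
compact set `closure (A ∪ B)`, and also of `closure (A ∪ C)`, so every extreme point of `K` lies in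
both closures. Such a point lies in `closure G`: the closures of the segments are disjoint, so it
is a limit of `B` and of `C` along one segment, where relatively convex sets are intervals, and
being extreme it cannot sit between them. By Krein–Milman, `K = closure (conv G)`. A point of
`J` outside `conv G` is then on the relative boundary of `K`, so a supporting hyperplane `H`
through it meets `J` in a set of smaller dimension; intersecting `A`, `B`, `C` and the segments
with `H` keeps every hypothesis, and induction on the dimension of `J` concludes.
-/

/-- A segment in `ℝ^n`: a set squeezed between the open and the closed segment
with endpoints `a`, `b`. -/
def IsSegment {n : ℕ} (S : Set (EuclideanSpace ℝ (Fin n))) : Prop :=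
  ∃ a b : EuclideanSpace ℝ (Fin n), openSegment ℝ a b ⊆ S ∧ S ⊆ segment ℝ a b

open Set Filter Topology Module
open AffineMap (lineMap)
open scoped RealInnerProductSpace

section Line

theorem Set.OrdConnected.mem_nhdsLT_of_mem_closure {α : Type*} [LinearOrder α]
    [TopologicalSpace α] [OrderTopology α] {s : Set α} {x : α} (hs : s.OrdConnected)
    (hsx : s ⊆ Iio x) (hx : x ∈ closure s) : s ∈ 𝓝[<] x := by
  obtain ⟨b, hb⟩ := closure_nonempty_iff.mp ⟨x, hx⟩
  refine mem_of_superset (Ioo_mem_nhdsLT (hsx hb)) fun t ht => ?_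
  obtain ⟨c, htc, hc⟩ := mem_closure_iff_nhds.mp hx (Ioi t) (Ioi_mem_nhds ht.2)
  exact hs.out hb hc ⟨ht.1.le, le_of_lt htc⟩

theorem Set.OrdConnected.mem_nhdsGT_of_mem_closure {α : Type*} [LinearOrder α]
    [TopologicalSpace α] [OrderTopology α] {s : Set α} {x : α} (hs : s.OrdConnected)
    (hsx : s ⊆ Ioi x) (hx : x ∈ closure s) : s ∈ 𝓝[>] x :=
  hs.dual.mem_nhdsLT_of_mem_closure (x := OrderDual.toDual x) hsx hx

theorem Real.mem_closure_inter_of_notMem_convexHull {B C : Set ℝ} {x : ℝ} (hB : Convex ℝ B)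
    (hC : Convex ℝ C) (hxB : x ∈ closure B) (hxC : x ∈ closure C)
    (hx : x ∉ convexHull ℝ (B ∪ C)) : x ∈ closure (B ∩ C) := by
  have hside : B ∪ C ⊆ Iio x ∨ B ∪ C ⊆ Ioi x := by
    by_contra h
    obtain ⟨⟨y, hy, hyx⟩, ⟨z, hz, hxz⟩⟩ := (not_or.mp h).imp not_subset.mp not_subset.mp
    exact hx ((convex_convexHull ℝ _).ordConnected.out (subset_convexHull ℝ _ hz)
      (subset_convexHull ℝ _ hy) ⟨not_lt.mp hxz, not_lt.mp hyx⟩)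
  rw [mem_closure_iff_frequently]
  rcases hside with h | h
  · exact (Eventually.frequently (inter_mem
      (hB.ordConnected.mem_nhdsLT_of_mem_closure (subset_union_left.trans h) hxB)
      (hC.ordConnected.mem_nhdsLT_of_mem_closure (subset_union_right.trans h) hxC))).filter_mono
      nhdsWithin_le_nhds
  · exact (Eventually.frequently (inter_mem
      (hB.ordConnected.mem_nhdsGT_of_mem_closure (subset_union_left.trans h) hxB)
      (hC.ordConnected.mem_nhdsGT_of_mem_closure (subset_union_right.trans h) hxC))).filter_mono
      nhdsWithin_le_nhds

variable {E : Type*} [NormedAddCommGroup E] [NormedSpace ℝ E]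

theorem isClosedEmbedding_lineMap {a b : E} (hab : a ≠ b) :
    IsClosedEmbedding (lineMap (k := ℝ) a b : ℝ → E) := by
  have : (lineMap (k := ℝ) a b : ℝ → E) = (· + a) ∘ fun t : ℝ => t • (b - a) := by
    ext t; simp [AffineMap.lineMap_apply]
  rw [this]
  exact (Homeomorph.addRight a).isClosedEmbedding.comp
    (isClosedEmbedding_smul_left (sub_ne_zero.mpr hab.symm))

theorem isCompact_segment (a b : E) : IsCompact (segment ℝ a b) := by
  rw [← convexHull_pair]
  exact (toFinite _).isCompact_convexHull ℝ

theorem image_preimage_lineMap_of_subset_segment {S : Set E} {a b : E}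
    (hS : S ⊆ segment ℝ a b) : lineMap (k := ℝ) a b '' (lineMap a b ⁻¹' S) = S :=
  image_preimage_eq_of_subset (hS.trans (segment_eq_image_lineMap ℝ a b ▸ image_subset_range _ _))

theorem convex_of_openSegment_subset_of_subset_segment {S : Set E} {a b : E}
    (h₁ : openSegment ℝ a b ⊆ S) (h₂ : S ⊆ segment ℝ a b) : Convex ℝ S := by
  rcases eq_or_ne a b with rfl | hab
  · exact (subsingleton_singleton.anti (h₂.trans (segment_same ℝ a).subset)).convex
  have hinj := AffineMap.lineMap_injective ℝ hab
  have hIoo : Ioo 0 1 ⊆ lineMap (k := ℝ) a b ⁻¹' S := fun t ht =>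
    h₁ (openSegment_eq_image_lineMap ℝ a b ▸ mem_image_of_mem _ ht)
  have hIcc : lineMap (k := ℝ) a b ⁻¹' S ⊆ Icc (0 : ℝ) 1 := fun t ht =>
    hinj.mem_set_image.mp (segment_eq_image_lineMap ℝ a b ▸ h₂ ht)
  rw [← image_preimage_lineMap_of_subset_segment h₂]
  refine Convex.affine_image _ (OrdConnected.convex ⟨fun s hs t ht u hu => ?_⟩)
  rcases hu.1.eq_or_lt with rfl | hsu
  · exact hs
  rcases hu.2.eq_or_lt with rfl | hut
  · exact ht
  exact hIoo ⟨(hIcc hs).1.trans_lt hsu, hut.trans_le (hIcc ht).2⟩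

theorem mem_closure_inter_of_subset_segment {B C : Set E} {a b v : E} (hB : Convex ℝ B)
    (hC : Convex ℝ C) (hBs : B ⊆ segment ℝ a b) (hCs : C ⊆ segment ℝ a b)
    (hvB : v ∈ closure B) (hvC : v ∈ closure C) (hv : v ∉ convexHull ℝ (B ∪ C)) :
    v ∈ closure (B ∩ C) := by
  rcases eq_or_ne a b with rfl | hab
  · have hBa : B.Subsingleton := subsingleton_singleton.anti (hBs.trans (segment_same ℝ a).subset)
    rw [hBa.isClosed.closure_eq] at hvB
    exact absurd (subset_convexHull ℝ (B ∪ C) (Or.inl hvB)) hv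
  set f : ℝ →ᵃ[ℝ] E := lineMap (k := ℝ) a b
  have hpull : ∀ S : Set E, S ⊆ segment ℝ a b → ∀ t : ℝ,
      t ∈ closure (f ⁻¹' S) ↔ f t ∈ closure S := by
    intro S hS t
    rw [(isClosedEmbedding_lineMap hab).isInducing.closure_eq_preimage_closure_image,
      image_preimage_lineMap_of_subset_segment hS, mem_preimage]
  obtain ⟨t, -, rfl⟩ : v ∈ f '' Icc 0 1 := segment_eq_image_lineMap ℝ a b ▸
    closure_minimal hBs (isCompact_segment a b).isClosed hvB
  have ht : t ∉ convexHull ℝ (f ⁻¹' B ∪ f ⁻¹' C) := fun ht => hv <| by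
    have := mem_image_of_mem f ht
    rw [f.image_convexHull, ← preimage_union, image_preimage_lineMap_of_subset_segment
      (union_subset hBs hCs)] at this
    exact this
  rw [← hpull _ (inter_subset_left.trans hBs), preimage_inter]
  exact Real.mem_closure_inter_of_notMem_convexHull (hB.affine_preimage f) (hC.affine_preimage f)
    ((hpull B hBs t).mpr hvB) ((hpull C hCs t).mpr hvC) ht

end Line

section ConvexHull

variable {E : Type*} [NormedAddCommGroup E] [NormedSpace ℝ E]

-- By Carathéodory, convex combinations of at most `finrank ℝ E + 1` points of `s` suffice.
theorem isCompact_convexHull [FiniteDimensional ℝ E] {s : Set E} (hs : IsCompact s) :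
    IsCompact (convexHull ℝ s) := by
  have key : convexHull ℝ s = ⋃ k ∈ Finset.range (finrank ℝ E + 2),
      (fun p : (Fin k → ℝ) × (Fin k → E) => ∑ i, p.1 i • p.2 i) ''
        (stdSimplex ℝ (Fin k) ×ˢ univ.pi fun _ => s) := by
    refine Subset.antisymm (fun x hx => ?_) (iUnion₂_subset fun k _ => ?_)
    · obtain ⟨ι, _, z, w, hzs, hz, hw0, hw1, rfl⟩ := eq_pos_convex_span_of_mem_convexHull hx
      have hcard : Fintype.card ι < finrank ℝ E + 2 :=
        Nat.lt_succ_of_le (hz.card_le_finrank_succ.trans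
          (Nat.succ_le_succ (Submodule.finrank_le _)))
      set e := Fintype.equivFin ι
      refine mem_biUnion (Finset.mem_range.mpr hcard) ⟨(w ∘ e.symm, z ∘ e.symm),
        ⟨⟨fun i => (hw0 _).le, by simpa [e.symm.sum_comp] using hw1⟩,
          fun i _ => hzs (mem_range_self _)⟩, ?_⟩
      exact e.symm.sum_comp fun i => w i • z i
    · rintro _ ⟨⟨w, z⟩, ⟨⟨hw0, hw1⟩, hz⟩, rfl⟩
      exact (convex_convexHull ℝ s).sum_mem (fun i _ => hw0 i) hw1
        fun i _ => subset_convexHull ℝ s (hz i (mem_univ i))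
  rw [key]
  exact (Finset.range _).isCompact_biUnion fun k _ =>
    ((isCompact_stdSimplex ℝ (Fin k)).prod (isCompact_univ_pi fun _ => hs)).image (by fun_prop)

theorem closure_convexHull_eq_convexHull_closure [FiniteDimensional ℝ E] {s : Set E}
    (hs : Bornology.IsBounded s) : closure (convexHull ℝ s) = convexHull ℝ (closure s) :=
  Subset.antisymm
    (closure_minimal (convexHull_mono subset_closure)
      (isCompact_convexHull hs.isCompact_closure).isClosed)
    (convexHull_min (closure_mono (subset_convexHull ℝ s)) (convex_convexHull ℝ s).closure)

theorem mem_of_mem_extremePoints_of_mem_convexHull {K S : Set E} {v : E} (hK : Convex ℝ K)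
    (hSK : S ⊆ K) (hv : v ∈ extremePoints ℝ K) (hvS : v ∈ convexHull ℝ S) : v ∈ S :=
  extremePoints_convexHull_subset
    (inter_extremePoints_subset_extremePoints_of_subset (convexHull_min hSK hK) ⟨hvS, hv⟩)

theorem closure_convexHull_eq_of_extremePoints_subset {s t : Set E}
    (hs : IsCompact (closure (convexHull ℝ s))) (hts : t ⊆ closure (convexHull ℝ s))
    (hext : extremePoints ℝ (closure (convexHull ℝ s)) ⊆ closure t) :
    closure (convexHull ℝ t) = closure (convexHull ℝ s) := by
  refine Subset.antisymm (closure_minimal (convexHull_min hts (convex_convexHull ℝ s).closure)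
    isClosed_closure) ?_
  rw [← closure_convexHull_extremePoints hs (convex_convexHull ℝ s).closure]
  exact closure_mono (convexHull_min (hext.trans (closure_mono (subset_convexHull ℝ t)))
    (convex_convexHull ℝ t).closure) |>.trans closure_closure.subset

theorem convexHull_eq_of_convexHull_inter_eq {S T X : Set E} (hS : S ⊆ X) (hT : T ⊆ X)
    (h : convexHull ℝ S ∩ X = convexHull ℝ T ∩ X) : convexHull ℝ S = convexHull ℝ T := by
  have hsub : ∀ {S T : Set E}, S ⊆ X → convexHull ℝ S ∩ X = convexHull ℝ T ∩ X →
      convexHull ℝ S ⊆ convexHull ℝ T := fun hS h =>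
    convexHull_min (fun z hz => (h ▸ ⟨subset_convexHull ℝ _ hz, hS hz⟩ : z ∈ _ ∩ X).1)
      (convex_convexHull ℝ _)
  exact Subset.antisymm (hsub hS h) (hsub hT h.symm)

theorem vectorSpan_convexHull (s : Set E) : vectorSpan ℝ (convexHull ℝ s) = vectorSpan ℝ s := by
  rw [← direction_affineSpan, affineSpan_convexHull, direction_affineSpan]

end ConvexHull

section Support

variable {E : Type*} [NormedAddCommGroup E] [InnerProductSpace ℝ E]

theorem convexHull_inter_hyperplane {S : Set E} {u : E} {c : ℝ} (hS : ∀ z ∈ S, ⟪u, z⟫ ≤ c) :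
    convexHull ℝ (S ∩ {z | ⟪u, z⟫ = c}) = convexHull ℝ S ∩ {z | ⟪u, z⟫ = c} := by
  classical
  have hH : Convex ℝ {z : E | ⟪u, z⟫ = c} :=
    convex_hyperplane ⟨inner_add_right u, fun r z => real_inner_smul_right u z r⟩ c
  refine Subset.antisymm (subset_inter (convexHull_mono inter_subset_left)
    (convexHull_min inter_subset_right hH)) ?_
  rintro y ⟨hy, hyc⟩
  obtain ⟨ι, _, w, z, hw0, hw1, hzS, rfl⟩ := mem_convexHull_iff_exists_fintype.mp hy
  have hslack : ∑ i, w i * (c - ⟪u, z i⟫) = 0 := by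
    simp only [mem_ofPred_eq, inner_sum, real_inner_smul_right] at hyc
    simp only [mul_sub, Finset.sum_sub_distrib, ← Finset.sum_mul, hw1, hyc, one_mul, sub_self]
  have hface : ∀ i, w i ≠ 0 → ⟪u, z i⟫ = c := fun i hi => by
    have := (Finset.sum_eq_zero_iff_of_nonneg fun i _ =>
      mul_nonneg (hw0 i) (sub_nonneg.mpr (hS _ (hzS i)))).mp hslack i (Finset.mem_univ i)
    linarith [(mul_eq_zero.mp this).resolve_left hi]
  rw [← Finset.centerMass_eq_of_sum_1 _ _ hw1, ← Finset.centerMass_filter_ne_zero]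
  exact Finset.centerMass_mem_convexHull _ (fun i _ => hw0 i)
    (by rw [Finset.sum_filter_ne_zero, hw1]; exact one_pos)
    fun i hi => ⟨hzS i, hface i (Finset.mem_filter.mp hi).2⟩

theorem finrank_vectorSpan_inter_hyperplane_lt [FiniteDimensional ℝ E] {J : Set E} {u : E}
    (hu : u ∈ vectorSpan ℝ J) (hu0 : u ≠ 0) (c : ℝ) :
    finrank ℝ (vectorSpan ℝ (J ∩ {z | ⟪u, z⟫ = c})) < finrank ℝ (vectorSpan ℝ J) := by
  have horth : vectorSpan ℝ (J ∩ {z | ⟪u, z⟫ = c}) ≤ LinearMap.ker (innerₛₗ ℝ u) := by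
    rw [vectorSpan_def, Submodule.span_le]
    rintro _ ⟨z₁, ⟨-, hz₁⟩, z₂, ⟨-, hz₂⟩, rfl⟩
    simp_all [inner_sub_right]
  refine Submodule.finrank_lt_finrank_of_lt
    ((vectorSpan_mono ℝ inter_subset_left).lt_of_ne fun h => hu0 ?_)
  have huu := horth (h ▸ hu)
  rw [LinearMap.mem_ker, innerₛₗ_apply_apply] at huu
  exact inner_self_eq_zero.mp huu

-- Take `s₀` in the relative interior of `C` and `z ∈ closure C` slightly beyond `x` on the ray
-- from `s₀`. The homothety `g` with centre `x` sending `z` to `s₀` sends a point `s' ∈ C` close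
-- to `z` into `C`, and `x` lies between `s'` and `g s'`.
theorem Convex.mem_of_eventually_mem_closure [FiniteDimensional ℝ E] {C : Set E} {x : E}
    (hC : Convex ℝ C) (hx : x ∈ affineSpan ℝ C)
    (h : ∀ᶠ y in 𝓝 x, y ∈ affineSpan ℝ C → y ∈ closure C) : x ∈ C := by
  set S := affineSpan ℝ C
  obtain ⟨_, ⟨s₀, hs₀, rfl⟩⟩ :=
    Set.Nonempty.intrinsicInterior hC ((affineSpan_nonempty ℝ).mp ⟨x, hx⟩)
  have h₀ : ∀ᶠ y in 𝓝 (s₀ : E), y ∈ S → y ∈ C := by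
    obtain ⟨U, hU, hUC⟩ := (mem_nhds_subtype _ _ _).mp (mem_interior_iff_mem_nhds.mp hs₀)
    exact mem_of_superset hU fun y hy hyS => hUC (show (⟨y, hyS⟩ : S) ∈ Subtype.val ⁻¹' U from hy)
  have hz : ∀ᶠ δ in 𝓝 (0 : ℝ), lineMap (s₀ : E) x (1 + δ) ∈ closure C := by
    have hcont : Tendsto (fun δ : ℝ => lineMap (s₀ : E) x (1 + δ)) (𝓝 0) (𝓝 x) := by
      have : Continuous fun δ : ℝ => lineMap (s₀ : E) x (1 + δ) :=
        AffineMap.lineMap_continuous.comp (continuous_const.add continuous_id)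
      simpa using this.tendsto 0
    exact (hcont.eventually h).mono fun δ hδ => hδ (AffineMap.lineMap_mem _ s₀.2 hx)
  obtain ⟨δ, hzδ, hδ : 0 < δ⟩ := ((hz.filter_mono nhdsWithin_le_nhds).and
    (self_mem_nhdsWithin (s := Ioi (0 : ℝ)) (a := 0))).exists
  set z := lineMap (s₀ : E) x (1 + δ)
  set g : E → E := fun w => lineMap w x ((1 + δ) / δ)
  have hgz : g z = s₀ := by
    simp only [g, z, AffineMap.lineMap_apply_module]
    match_scalars <;> field_simp <;> ring
  have hg : ∀ᶠ w in 𝓝 z, g w ∈ S → g w ∈ C :=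
    ((by fun_prop : Continuous g).tendsto z).eventually (hgz ▸ h₀)
  obtain ⟨s', hs'C, hs'⟩ := ((mem_closure_iff_frequently.mp hzδ).and_eventually hg).exists
  have hgs' : g s' ∈ C := hs' (AffineMap.lineMap_mem _ (subset_affineSpan ℝ C hs'C) hx)
  have hxeq : lineMap s' (g s') (δ / (1 + δ)) = x := by
    simp only [g, AffineMap.lineMap_apply_module]
    match_scalars
    · field_simp
      ring
    · field_simp
  rw [← hxeq]
  exact hC.lineMap_mem hs'C hgs' ⟨by positivity, (div_le_one (by positivity)).mpr (by linarith)⟩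

theorem IsClosed.exists_inner_sub_nonpos [CompleteSpace E] {K : Set E} (hK : IsClosed K)
    (hKc : Convex ℝ K) (hKne : K.Nonempty) (y : E) : ∃ p ∈ K, ∀ w ∈ K, ⟪y - p, w - p⟫ ≤ 0 := by
  obtain ⟨p, hp, hmin⟩ := exists_norm_eq_iInf_of_complete_convex hKne hK.isComplete hKc y
  exact ⟨p, hp, (norm_eq_iInf_iff_real_inner_le_zero hKc hp).mp hmin⟩

-- Project points of `S \ K` converging to `x` onto `K`; a limit of the normalised
-- displacements is the required normal vector.
theorem exists_mem_direction_inner_le_of_mem_closure_sdiff [FiniteDimensional ℝ E]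
    {K : Set E} {S : AffineSubspace ℝ E} {x : E} (hK : IsClosed K) (hKc : Convex ℝ K)
    (hKS : K ⊆ S) (hxK : x ∈ K) (hx : x ∈ closure ((S : Set E) \ K)) :
    ∃ u ∈ S.direction, u ≠ 0 ∧ ∀ w ∈ K, ⟪u, w⟫ ≤ ⟪u, x⟫ := by
  obtain ⟨y, hyS, hyx⟩ := mem_closure_iff_seq_limit.mp hx
  choose p hpK hp using fun n => hK.exists_inner_sub_nonpos hKc ⟨x, hxK⟩ (y n)
  have hpx : Tendsto p atTop (𝓝 x) := by
    refine tendsto_iff_dist_tendsto_zero.mpr (squeeze_zero (fun _ => dist_nonneg) (fun n => ?_)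
      (tendsto_iff_dist_tendsto_zero.mp hyx))
    have hsq : ‖y n - x‖ ^ 2 = ‖y n - p n‖ ^ 2 - 2 * ⟪y n - p n, x - p n⟫ + ‖x - p n‖ ^ 2 := by
      rw [← norm_sub_sq_real, sub_sub_sub_cancel_right]
    rw [dist_eq_norm, dist_eq_norm, ← norm_neg, neg_sub]
    nlinarith [hp n x hxK, norm_nonneg (y n - x), norm_nonneg (x - p n)]
  set u : ℕ → E := fun n => ‖y n - p n‖⁻¹ • (y n - p n)
  have hu : ∀ n, u n ∈ Metric.sphere (0 : E) 1 := fun n => by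
    have : y n - p n ≠ 0 := sub_ne_zero.mpr fun h => (hyS n).2 (h ▸ hpK n)
    simp [u, norm_smul, this]
  obtain ⟨u₀, hu₀, φ, hφ, hlim⟩ := (isCompact_sphere (0 : E) 1).tendsto_subseq hu
  refine ⟨u₀, ?_, ne_zero_of_mem_unit_sphere ⟨u₀, hu₀⟩, fun w hw => ?_⟩
  · refine (Submodule.closed_of_finiteDimensional _).mem_of_tendsto hlim
      (Eventually.of_forall fun n => S.direction.smul_mem _ ?_)
    exact AffineSubspace.vsub_mem_direction (hyS _).1 (hKS (hpK _))
  have hlim' : Tendsto (fun n => ⟪u (φ n), w - p (φ n)⟫) atTop (𝓝 ⟪u₀, w - x⟫) :=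
    hlim.inner (tendsto_const_nhds.sub (hpx.comp hφ.tendsto_atTop))
  have := le_of_tendsto' hlim' fun n => by
    simp only [u, real_inner_smul_left]
    exact mul_nonpos_of_nonneg_of_nonpos (inv_nonneg.mpr (norm_nonneg _)) (hp _ w hw)
  rw [inner_sub_right] at this
  linarith

theorem Convex.exists_mem_vectorSpan_inner_le_of_mem_closure [FiniteDimensional ℝ E]
    {C : Set E} {x : E} (hC : Convex ℝ C) (hx : x ∈ closure C) (hxC : x ∉ C) :
    ∃ u ∈ vectorSpan ℝ C, u ≠ 0 ∧ ∀ w ∈ closure C, ⟪u, w⟫ ≤ ⟪u, x⟫ := by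
  have hCS : closure C ⊆ affineSpan ℝ C :=
    closure_minimal (subset_affineSpan ℝ C) (AffineSubspace.closed_of_finiteDimensional _)
  rw [← direction_affineSpan]
  refine exists_mem_direction_inner_le_of_mem_closure_sdiff isClosed_closure hC.closure hCS hx ?_
  by_contra h
  rw [mem_closure_iff_frequently, not_frequently] at h
  exact hxC (hC.mem_of_eventually_mem_closure (hCS hx)
    (h.mono fun y hy hyS => by_contra fun hyC => hy ⟨hyS, hyC⟩))

end Support

section RelativelyConvex

variable {E : Type*} [AddCommGroup E] [Module ℝ E]

theorem subset_of_eq_convexHull_inter {D X : Set E} (hD : D = convexHull ℝ D ∩ X) : D ⊆ X :=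
  fun _ hz => (hD ▸ hz : _ ∈ convexHull ℝ D ∩ X).2

theorem convex_inter_of_eq_convexHull_inter {D X T : Set E} (hD : D = convexHull ℝ D ∩ X)
    (hT : Convex ℝ T) (hTX : T ⊆ X) : Convex ℝ (D ∩ T) := by
  have : D ∩ T = convexHull ℝ D ∩ T := by
    conv_lhs => rw [hD]
    rw [inter_assoc, inter_eq_right.mpr hTX]
  exact this ▸ (convex_convexHull ℝ D).inter hT

theorem inter_eq_convexHull_inter_iUnion_inter {ι : Type*} {I : ι → Set E} {D : Set E}
    (hD : D = convexHull ℝ D ∩ ⋃ j, I j) (H : Set E) :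
    D ∩ H = convexHull ℝ (D ∩ H) ∩ ⋃ j, I j ∩ H := by
  rw [← iUnion_inter]
  refine Subset.antisymm (fun z hz => ⟨subset_convexHull ℝ _ hz,
    subset_of_eq_convexHull_inter hD hz.1, hz.2⟩) ?_
  rintro z ⟨hz, hzX, hzH⟩
  rw [hD]
  exact ⟨⟨convexHull_mono inter_subset_left hz, hzX⟩, hzH⟩

end RelativelyConvex

theorem exists_mem_closure_inter_of_subset_iUnion {X ι : Type*} [TopologicalSpace X] [Finite ι]
    {I : ι → Set X} {D : Set X} {v : X} (hD : D ⊆ ⋃ j, I j) (hv : v ∈ closure D) :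
    ∃ j, v ∈ closure (D ∩ I j) := by
  rwa [← inter_eq_left.mpr hD, inter_iUnion, closure_iUnion_of_finite, mem_iUnion] at hv

section SegmentFamily

variable {E : Type*} [NormedAddCommGroup E] [NormedSpace ℝ E] {ι : Type*}

-- Members are only convex subsets of segments, so that the class is stable under `inter`.
structure IsSeparatedSegmentFamily (I : ι → Set E) : Prop where
  convex : ∀ j, Convex ℝ (I j)
  subset_segment : ∀ j, ∃ a b, I j ⊆ segment ℝ a b
  disjoint_closure : Pairwise fun s t => Disjoint (closure (I s)) (closure (I t))

namespace IsSeparatedSegmentFamily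

theorem inter {I : ι → Set E} (hI : IsSeparatedSegmentFamily I) {H : Set E} (hH : Convex ℝ H) :
    IsSeparatedSegmentFamily fun j => I j ∩ H where
  convex j := (hI.convex j).inter hH
  subset_segment j :=
    let ⟨a, b, h⟩ := hI.subset_segment j
    ⟨a, b, inter_subset_left.trans h⟩
  disjoint_closure _ _ hst :=
    (hI.disjoint_closure hst).mono (closure_mono inter_subset_left) (closure_mono inter_subset_left)

theorem isBounded_iUnion [Finite ι] {I : ι → Set E} (hI : IsSeparatedSegmentFamily I) :
    Bornology.IsBounded (⋃ j, I j) :=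
  Bornology.isBounded_iUnion.mpr fun j =>
    let ⟨a, b, h⟩ := hI.subset_segment j
    (isCompact_segment a b).isBounded.subset h

-- The disjoint closures put `v` on a single segment, where the one-dimensional lemma applies.
theorem mem_closure_inter_of_mem_extremePoints [Finite ι] {I : ι → Set E}
    (hI : IsSeparatedSegmentFamily I) {B C K : Set E} {v : E}
    (hB : B = convexHull ℝ B ∩ ⋃ j, I j) (hC : C = convexHull ℝ C ∩ ⋃ j, I j)
    (hK : Convex ℝ K) (hBCK : B ∪ C ⊆ K) (hv : v ∈ extremePoints ℝ K)
    (hvB : v ∈ closure B) (hvC : v ∈ closure C) (hvBC : v ∉ B ∪ C) : v ∈ closure (B ∩ C) := by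
  obtain ⟨j, hjB⟩ :=
    exists_mem_closure_inter_of_subset_iUnion (subset_of_eq_convexHull_inter hB) hvB
  obtain ⟨k, hkC⟩ :=
    exists_mem_closure_inter_of_subset_iUnion (subset_of_eq_convexHull_inter hC) hvC
  obtain rfl : j = k := by_contra fun hjk => disjoint_left.mp (hI.disjoint_closure hjk)
    (closure_mono inter_subset_right hjB) (closure_mono inter_subset_right hkC)
  obtain ⟨a, b, hab⟩ := hI.subset_segment j
  have hsub : B ∩ I j ∪ C ∩ I j ⊆ B ∪ C := union_subset_union inter_subset_left inter_subset_left
  refine closure_mono (inter_subset_inter inter_subset_left inter_subset_left) <|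
    mem_closure_inter_of_subset_segment
      (convex_inter_of_eq_convexHull_inter hB (hI.convex j) (subset_iUnion I j))
      (convex_inter_of_eq_convexHull_inter hC (hI.convex j) (subset_iUnion I j))
      (inter_subset_right.trans hab) (inter_subset_right.trans hab) hjB hkC fun hconv => hvBC ?_
  exact hsub (mem_of_mem_extremePoints_of_mem_convexHull hK (hsub.trans hBCK) hv hconv)

theorem extremePoints_subset_closure_union_inter [Finite ι] [FiniteDimensional ℝ E]
    {I : ι → Set E} (hI : IsSeparatedSegmentFamily I) {A B C : Set E} (hA : A ⊆ ⋃ j, I j)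
    (hB : B = convexHull ℝ B ∩ ⋃ j, I j) (hC : C = convexHull ℝ C ∩ ⋃ j, I j)
    (hABC : convexHull ℝ (A ∪ B) = convexHull ℝ (A ∪ C)) :
    extremePoints ℝ (closure (convexHull ℝ (A ∪ B))) ⊆ closure (A ∪ B ∩ C) := by
  intro v hv
  set K := closure (convexHull ℝ (A ∪ B))
  have hKc : Convex ℝ K := (convex_convexHull ℝ _).closure
  have hsubK : ∀ {D : Set E}, convexHull ℝ (A ∪ D) = convexHull ℝ (A ∪ B) → A ∪ D ⊆ K :=
    fun h z hz => subset_closure (h ▸ subset_convexHull ℝ _ hz : z ∈ convexHull ℝ (A ∪ B))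
  have hcl : ∀ {D : Set E}, D ⊆ ⋃ j, I j → convexHull ℝ (A ∪ D) = convexHull ℝ (A ∪ B) →
      v ∈ closure A ∪ closure D := fun hD h => by
    rw [← closure_union]
    refine extremePoints_convexHull_subset (𝕜 := ℝ) ?_
    rwa [← closure_convexHull_eq_convexHull_closure (hI.isBounded_iUnion.subset
      (union_subset hA hD)), h]
  have hBAC : v ∈ B → v ∈ A ∪ C := fun h => mem_of_mem_extremePoints_of_mem_convexHull hKc
    (hsubK hABC.symm) hv (hABC ▸ subset_convexHull ℝ _ (Or.inr h))
  have hCAB : v ∈ C → v ∈ A ∪ B := fun h => mem_of_mem_extremePoints_of_mem_convexHull hKc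
    (hsubK rfl) hv (hABC.symm ▸ subset_convexHull ℝ _ (Or.inr h))
  rcases hcl (subset_of_eq_convexHull_inter hB) rfl with hvA | hvB
  · exact closure_mono subset_union_left hvA
  rcases hcl (subset_of_eq_convexHull_inter hC) hABC.symm with hvA | hvC
  · exact closure_mono subset_union_left hvA
  by_cases hvBC : v ∈ B ∪ C
  · refine subset_closure ?_
    simp only [mem_union, mem_inter_iff] at hvBC hBAC hCAB ⊢
    tauto
  · exact closure_mono subset_union_right (hI.mem_closure_inter_of_mem_extremePoints hB hC hKc
      (union_subset (subset_union_right.trans (hsubK rfl))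
        (subset_union_right.trans (hsubK hABC.symm))) hv hvB hvC hvBC)

theorem closure_convexHull_union_inter [Finite ι] [FiniteDimensional ℝ E] {I : ι → Set E}
    (hI : IsSeparatedSegmentFamily I) {A B C : Set E} (hA : A ⊆ ⋃ j, I j)
    (hB : B = convexHull ℝ B ∩ ⋃ j, I j) (hC : C = convexHull ℝ C ∩ ⋃ j, I j)
    (hABC : convexHull ℝ (A ∪ B) = convexHull ℝ (A ∪ C)) :
    closure (convexHull ℝ (A ∪ B ∩ C)) = closure (convexHull ℝ (A ∪ B)) := by
  have hbdd : Bornology.IsBounded (A ∪ B) :=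
    hI.isBounded_iUnion.subset (union_subset hA (subset_of_eq_convexHull_inter hB))
  refine closure_convexHull_eq_of_extremePoints_subset ?_
    ((union_subset_union_right A inter_subset_left).trans
      ((subset_convexHull ℝ _).trans subset_closure))
    (hI.extremePoints_subset_closure_union_inter hA hB hC hABC)
  rw [closure_convexHull_eq_convexHull_closure hbdd]
  exact isCompact_convexHull hbdd.isCompact_closure

end IsSeparatedSegmentFamily

end SegmentFamily

namespace IsSeparatedSegmentFamily

variable {E : Type*} [NormedAddCommGroup E] [InnerProductSpace ℝ E] [FiniteDimensional ℝ E]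
  {ι : Type*} [Finite ι]

theorem mem_convexHull_union_inter {I : ι → Set E} (hI : IsSeparatedSegmentFamily I)
    {A B C : Set E} (hA : A = convexHull ℝ A ∩ ⋃ j, I j) (hB : B = convexHull ℝ B ∩ ⋃ j, I j)
    (hC : C = convexHull ℝ C ∩ ⋃ j, I j)
    (hBC : convexHull ℝ (A ∪ B) ∩ ⋃ j, I j = convexHull ℝ (A ∪ C) ∩ ⋃ j, I j) {x : E}
    (hx : x ∈ convexHull ℝ (A ∪ B) ∩ ⋃ j, I j) : x ∈ convexHull ℝ (A ∪ B ∩ C) := by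
  have hAX := subset_of_eq_convexHull_inter hA
  have hBX := subset_of_eq_convexHull_inter hB
  have hABC : convexHull ℝ (A ∪ B) = convexHull ℝ (A ∪ C) :=
    convexHull_eq_of_convexHull_inter_eq (union_subset hAX hBX)
      (union_subset hAX (subset_of_eq_convexHull_inter hC)) hBC
  have hK := hI.closure_convexHull_union_inter hAX hB hC hABC
  by_contra hxG
  obtain ⟨u, hu, hu0, hsupp⟩ :=
    (convex_convexHull ℝ _).exists_mem_vectorSpan_inner_le_of_mem_closure
      (hK ▸ subset_closure hx.1) hxG
  set H := {z : E | ⟪u, z⟫ = ⟪u, x⟫}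
  have hcut : ∀ {D : Set E}, convexHull ℝ (A ∪ D) = convexHull ℝ (A ∪ B) →
      convexHull ℝ (A ∩ H ∪ D ∩ H) ∩ ⋃ j, I j ∩ H = (convexHull ℝ (A ∪ D) ∩ ⋃ j, I j) ∩ H :=
    fun {D} h => by
      have hle : ∀ z ∈ A ∪ D, ⟪u, z⟫ ≤ ⟪u, x⟫ := fun z hz => hsupp z
        (hK ▸ subset_closure (h ▸ subset_convexHull ℝ _ hz : z ∈ convexHull ℝ (A ∪ B)))
      rw [← union_inter_distrib_right, convexHull_inter_hyperplane hle, ← iUnion_inter,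
        ← inter_inter_distrib_right]
  have hrank : finrank ℝ (vectorSpan ℝ (convexHull ℝ (A ∩ H ∪ B ∩ H) ∩ ⋃ j, I j ∩ H)) <
      finrank ℝ (vectorSpan ℝ (convexHull ℝ (A ∪ B) ∩ ⋃ j, I j)) := by
    have hGJ : A ∪ B ∩ C ⊆ convexHull ℝ (A ∪ B) ∩ ⋃ j, I j := fun z hz =>
      ⟨subset_convexHull ℝ _ (union_subset_union_right A inter_subset_left hz),
        union_subset hAX (inter_subset_left.trans hBX) hz⟩
    rw [vectorSpan_convexHull] at hu
    rw [hcut rfl]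
    exact finrank_vectorSpan_inter_hyperplane_lt (vectorSpan_mono ℝ hGJ hu) hu0 _
  have hH : Convex ℝ H :=
    convex_hyperplane ⟨inner_add_right u, fun r z => real_inner_smul_right u z r⟩ _
  have hxH := mem_convexHull_union_inter (hI.inter hH)
    (inter_eq_convexHull_inter_iUnion_inter hA H) (inter_eq_convexHull_inter_iUnion_inter hB H)
    (inter_eq_convexHull_inter_iUnion_inter hC H) (by rw [hcut rfl, hcut hABC.symm, hBC])
    (x := x) (by rw [hcut rfl]; exact ⟨hx, rfl⟩)
  exact hxG (convexHull_mono (union_subset_union inter_subset_left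
    (inter_subset_inter inter_subset_left inter_subset_left)) hxH)
termination_by finrank ℝ (vectorSpan ℝ (convexHull ℝ (A ∪ B) ∩ ⋃ j, I j))

end IsSeparatedSegmentFamily

/-- If `X ⊆ ℝ^n` is a finite union of segments whose closures are pairwise disjoint,
then the lattice `Co(ℝ^n, X)` is join-semidistributive. -/
theorem jsd_of_pairwise_disjoint_closures {n k : ℕ}
    (I : Fin k → Set (EuclideanSpace ℝ (Fin n))) (hI : ∀ j, IsSegment (I j))
    (hdisj : ∀ s t, s ≠ t → closure (I s) ∩ closure (I t) = ∅)
    (X : Set (EuclideanSpace ℝ (Fin n))) (hX : X = ⋃ j, I j) :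
    ∀ A B C, relConvex X A → relConvex X B → relConvex X C →
      coJoin X A B = coJoin X A C → coJoin X A B = coJoin X A (B ∩ C) := by
  subst hX
  intro A B C hA hB hC hBC
  have hfam : IsSeparatedSegmentFamily I :=
    { convex := fun j => by
        obtain ⟨a, b, h₁, h₂⟩ := hI j
        exact convex_of_openSegment_subset_of_subset_segment h₁ h₂
      subset_segment := fun j => by
        obtain ⟨a, b, -, h₂⟩ := hI j
        exact ⟨a, b, h₂⟩
      disjoint_closure := fun s t hst => disjoint_iff_inter_eq_empty.mpr (hdisj s t hst) }
  refine Subset.antisymm (fun x hx => ⟨hfam.mem_convexHull_union_inter hA hB hC hBC hx, hx.2⟩) ?_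
  exact inter_subset_inter_left _ (convexHull_mono (union_subset_union_right A inter_subset_left))
end

section
/- If X ⊆ ℝ^n is such that the lattice Co(ℝ^n, X) is join-semidistributive, then X is sparse: for every 2-dimensional affine subspace H of ℝ^n, the set X ∩ H has empty interior in H. -/
open Set Module

/-! If `X ∩ H` contains a relatively open disc of the plane `H`, it contains a small triangle,
and inside a triangle contained in `X` every segment is relatively convex. Take the base `A` of
the triangle and two disjoint open segments `B`, `C` descending from the apex, symmetric to each
other, each inside `conv (A ∪ other)`. Then `A ∨ B = A ∨ C`, while `A ∨ (B ∩ C) = A` misses the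
points of `B`. -/

lemma Submodule.exists_linearIndependent_pair_norm_lt {E : Type*} [NormedAddCommGroup E]
    [NormedSpace ℝ E] {V : Submodule ℝ E} (hV : 1 < finrank ℝ V) {δ : ℝ} (hδ : 0 < δ) :
    ∃ d ∈ V, ∃ e ∈ V, LinearIndependent ℝ ![d, e] ∧ ‖d‖ < δ ∧ ‖e‖ < δ := by
  have : Nontrivial V := Module.nontrivial_of_finrank_pos (zero_lt_one.trans hV)
  obtain ⟨u, hu⟩ := exists_ne (0 : V)
  obtain ⟨v, huv⟩ := exists_linearIndependent_pair_of_one_lt_finrank hV hu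
  have huv' : LinearIndependent ℝ ![(u : E), v] := by
    have h := huv.map' V.subtype V.ker_subtype
    rwa [show V.subtype ∘ ![u, v] = ![(u : E), v] by ext i; fin_cases i <;> rfl] at h
  have small : ∀ w : E, ∀ᶠ r : ℝ in nhds 0, ‖r • w‖ < δ := fun w =>
    (show Continuous fun r : ℝ => ‖r • w‖ by fun_prop).continuousAt.eventually_lt
      continuousAt_const (by simpa using hδ)
  obtain ⟨r, ⟨hru, hrv⟩, hr⟩ :=
    (((small u).and (small v)).filter_mono nhdsWithin_le_nhds |>.and
      (self_mem_nhdsWithin (s := {0}ᶜ) (a := (0 : ℝ)))).exists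
  exact ⟨r • u, V.smul_mem r u.2, r • v, V.smul_mem r v.2,
    (LinearIndependent.pair_smul_iff hr).2 huv', hru, hrv⟩

section Configuration

variable {E : Type*} [AddCommGroup E] [Module ℝ E]

/- Inside the triangle with vertices `x ± 2 • d` and `x + e`: the `spine` is its base, and the
two `wing`s are open segments from `x + e` down to `x + e / 2 ∓ d / 4`. -/
def spine (x d : E) : Set E := segment ℝ (x - (2 : ℝ) • d) (x + (2 : ℝ) • d)

def wing (x d e : E) : Set E := openSegment ℝ (x + (2⁻¹ : ℝ) • e - (4⁻¹ : ℝ) • d) (x + e)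

lemma convex_spine (x d : E) : Convex ℝ (spine x d) := convex_segment _ _

lemma convex_wing (x d e : E) : Convex ℝ (wing x d e) := convex_openSegment _ _

lemma spine_neg (x d : E) : spine x (-d) = spine x d := by
  rw [spine, spine, smul_neg, sub_neg_eq_add, ← sub_eq_add_neg, segment_symm]

lemma wing_subset_convexHull_spine_union_wing_neg (x d e : E) :
    wing x d e ⊆ convexHull ℝ (spine x d ∪ wing x (-d) e) := by
  rintro _ ⟨a, t, ha, ht, hat, rfl⟩
  obtain rfl : a = 1 - t := by linarith
  have hA : x - ((2 + t) / 2) • d ∈ spine x d :=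
    ⟨(6 + t) / 8, (2 - t) / 8, by linarith, by linarith, by ring, by module⟩
  have hC : ((1 - t) / 2) • (x + (2⁻¹ : ℝ) • e - (4⁻¹ : ℝ) • -d) + ((1 + t) / 2) • (x + e) ∈
      wing x (-d) e :=
    ⟨_, _, by linarith, by linarith, by ring, rfl⟩
  have h3t : 0 < 3 + t := by linarith
  convert convex_convexHull ℝ (spine x d ∪ wing x (-d) e)
    (subset_convexHull ℝ _ (mem_union_left _ hA)) (subset_convexHull ℝ _ (mem_union_right _ hC))
    (by positivity : 0 ≤ (1 - t) / (3 + t)) (by positivity : 0 ≤ (2 + 2 * t) / (3 + t))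
    (by field_simp; ring) using 1
  match_scalars <;> field_simp <;> ring

lemma convexHull_spine_union_wing_neg (x d e : E) :
    convexHull ℝ (spine x d ∪ wing x d e) = convexHull ℝ (spine x d ∪ wing x (-d) e) := by
  have h := wing_subset_convexHull_spine_union_wing_neg x (-d) e
  rw [neg_neg, spine_neg] at h
  exact (convexHull_min (union_subset (subset_union_left.trans (subset_convexHull ℝ _))
      (wing_subset_convexHull_spine_union_wing_neg x d e)) (convex_convexHull ℝ _)).antisymm
    (convexHull_min (union_subset (subset_union_left.trans (subset_convexHull ℝ _)) h)
      (convex_convexHull ℝ _))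

variable {x d e : E}

lemma disjoint_wing_wing_neg (hde : LinearIndependent ℝ ![d, e]) :
    Disjoint (wing x d e) (wing x (-d) e) := by
  rw [Set.disjoint_left]
  rintro _ ⟨a, b, ha, -, hab, rfl⟩ ⟨a', b', ha', -, hab', h⟩
  obtain rfl : b = 1 - a := by linarith
  obtain rfl : b' = 1 - a' := by linarith
  have h0 : ((a + a') / 4) • d + ((a - a') / 2) • e = 0 := by
    rw [← sub_eq_zero.2 h]; module
  linarith [(LinearIndependent.pair_iff.1 hde _ _ h0).1]

lemma not_wing_subset_spine (hde : LinearIndependent ℝ ![d, e]) :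
    ¬ wing x d e ⊆ spine x d := by
  intro h
  obtain ⟨θ₁, θ₂, -, -, hθ, hm⟩ := h ⟨2⁻¹, 2⁻¹, by norm_num, by norm_num, by norm_num, rfl⟩
  obtain rfl : θ₁ = 1 - θ₂ := by linarith
  have h0 : (4 * θ₂ - 2 + 8⁻¹) • d + (-(3 / 4) : ℝ) • e = 0 := by
    rw [← sub_eq_zero.2 hm]; module
  exact absurd (LinearIndependent.pair_iff.1 hde _ _ h0).2 (by norm_num)

variable {K : Set E}

lemma spine_subset (hK : Convex ℝ K) (h₁ : x - (2 : ℝ) • d ∈ K) (h₂ : x + (2 : ℝ) • d ∈ K) :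
    spine x d ⊆ K :=
  hK.segment_subset h₁ h₂

lemma wing_subset (hK : Convex ℝ K) (h₁ : x - (2 : ℝ) • d ∈ K) (h₂ : x + (2 : ℝ) • d ∈ K)
    (h₃ : x + e ∈ K) : wing x d e ⊆ K := by
  have hmid : x - (2⁻¹ : ℝ) • d ∈ K :=
    spine_subset hK h₁ h₂ ⟨5 / 8, 3 / 8, by norm_num, by norm_num, by norm_num, by module⟩
  have hb : x + (2⁻¹ : ℝ) • e - (4⁻¹ : ℝ) • d ∈ K := by
    convert hK hmid h₃ (by norm_num : (0 : ℝ) ≤ 2⁻¹) (by norm_num : (0 : ℝ) ≤ 2⁻¹) (by norm_num)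
      using 1
    module
  exact (openSegment_subset_segment ℝ _ _).trans (hK.segment_subset hb h₃)

end Configuration

section CoLattice

variable {n : ℕ}

lemma relConvex_of_convex {X Y : Set (EuclideanSpace ℝ (Fin n))} (hY : Convex ℝ Y)
    (hYX : Y ⊆ X) : relConvex X Y := by
  rw [relConvex, hY.convexHull_eq, inter_eq_left.2 hYX]

def CoJoinSemidistrib (X : Set (EuclideanSpace ℝ (Fin n))) : Prop :=
  ∀ A B C, relConvex X A → relConvex X B → relConvex X C →
    coJoin X A B = coJoin X A C → coJoin X A B = coJoin X A (B ∩ C)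

theorem not_coJoinSemidistrib_of_convex_subset {X K : Set (EuclideanSpace ℝ (Fin n))}
    (hK : Convex ℝ K) (hKX : K ⊆ X) {x d e : EuclideanSpace ℝ (Fin n)}
    (hde : LinearIndependent ℝ ![d, e]) (h₁ : x - (2 : ℝ) • d ∈ K) (h₂ : x + (2 : ℝ) • d ∈ K)
    (h₃ : x + e ∈ K) : ¬ CoJoinSemidistrib X := by
  intro hjsd
  have h₁' : x - (2 : ℝ) • -d ∈ K := by rwa [smul_neg, sub_neg_eq_add]
  have h₂' : x + (2 : ℝ) • -d ∈ K := by rwa [smul_neg, ← sub_eq_add_neg]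
  have hB : wing x d e ⊆ X := (wing_subset hK h₁ h₂ h₃).trans hKX
  have hjoin := hjsd _ _ _
    (relConvex_of_convex (convex_spine x d) ((spine_subset hK h₁ h₂).trans hKX))
    (relConvex_of_convex (convex_wing x d e) hB)
    (relConvex_of_convex (convex_wing x (-d) e) ((wing_subset hK h₁' h₂' h₃).trans hKX))
    (by rw [coJoin, coJoin, convexHull_spine_union_wing_neg])
  rw [(disjoint_wing_wing_neg hde).inter_eq, coJoin, coJoin, union_empty,
    (convex_spine x d).convexHull_eq] at hjoin
  refine not_wing_subset_spine (x := x) hde fun p hp => ?_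
  have hp' : p ∈ convexHull ℝ (spine x d ∪ wing x d e) ∩ X :=
    ⟨subset_convexHull ℝ _ (mem_union_right _ hp), hB hp⟩
  exact (hjoin ▸ hp').1

end CoLattice

/-- If `Co(ℝ^n, X)` is join-semidistributive, then `X` is sparse: for every
`2`-dimensional affine subspace `H` of `ℝ^n`, the set `X ∩ H` has empty interior
in the subspace topology of `H`. -/
theorem sparse_of_jsd {n : ℕ} (X : Set (EuclideanSpace ℝ (Fin n)))
    (hjsd : ∀ A B C, relConvex X A → relConvex X B → relConvex X C →
      coJoin X A B = coJoin X A C → coJoin X A B = coJoin X A (B ∩ C)) :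
    ∀ H : AffineSubspace ℝ (EuclideanSpace ℝ (Fin n)),
      Module.finrank ℝ H.direction = 2 →
      interior ((↑) ⁻¹' X : Set H) = (∅ : Set H) := by
  intro H hH
  refine eq_empty_of_forall_notMem fun x hx => ?_
  obtain ⟨ε, hε, hball⟩ := Metric.mem_nhds_iff.1 (mem_interior_iff_mem_nhds.1 hx)
  obtain ⟨d, hd, e, he, hde, hdε, heε⟩ :=
    H.direction.exists_linearIndependent_pair_norm_lt (hH ▸ one_lt_two) (half_pos hε)
  have hmem : ∀ v ∈ H.direction, ‖v‖ < ε → (x : EuclideanSpace ℝ (Fin n)) + v ∈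
      (H : Set (EuclideanSpace ℝ (Fin n))) ∩ Metric.ball (x : EuclideanSpace ℝ (Fin n)) ε :=
    fun v hv hvε =>
      ⟨by simpa [add_comm] using H.vadd_mem_of_mem_direction hv x.2, by simpa using hvε⟩
  have h2d : ‖(2 : ℝ) • d‖ < ε := by rw [norm_smul, Real.norm_two]; linarith
  refine not_coJoinSemidistrib_of_convex_subset (H.convex.inter (convex_ball _ _)) ?_ hde
    ?_ (hmem _ (H.direction.smul_mem 2 hd) h2d) (hmem e he (by linarith)) hjsd
  · rintro p ⟨hpH, hp⟩
    exact hball (show (⟨p, hpH⟩ : H) ∈ Metric.ball x ε from hp)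
  · rw [sub_eq_add_neg]
    exact hmem _ (neg_mem (H.direction.smul_mem 2 hd)) (by rwa [norm_neg])
end

section
/- Let p_1, ..., p_{n+1} be the vertices of an n-dimensional simplex in ℝ^n. For A ⊆ {1,...,n+1} nonempty, let ψ(A^c) denote the relative interior of the convex hull of {p_i : i ∈ A} (a point if |A| = 1), and ψ(full set) = ∅. Then for all a, b ⊆ {1,...,n+1}: conv(ψ(a) ∪ ψ(b)) = ψ(a) ∪ ψ(b) ∪ ψ(a ∩ b). -/
open Finset in
/-- The map `ψ`: for `t ⊆ {1,...,n+1}`, `ψ(t)` is the relative interior of the convex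
hull of `{p_i : i ∉ t}` (so `ψ(t) = ∅` if `t` is everything, `ψ(t) = {p_i}` if the
complement of `t` is `{i}`). -/
def psiFace {n : ℕ} (p : Fin (n + 1) → EuclideanSpace ℝ (Fin n))
    (t : Finset (Fin (n + 1))) : Set (EuclideanSpace ℝ (Fin n)) :=
  {x | ∃ l : Fin (n + 1) → ℝ,
    (∀ i ∈ tᶜ, 0 < l i) ∧ ∑ i ∈ tᶜ, l i = 1 ∧ x = ∑ i ∈ tᶜ, l i • p i}

open Finset in
lemma psiFace_combo {n : ℕ} {p : Fin (n + 1) → EuclideanSpace ℝ (Fin n)}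
    {t u : Finset (Fin (n + 1))} {x y : EuclideanSpace ℝ (Fin n)} {s : ℝ}
    (hx : x ∈ psiFace p t) (hy : y ∈ psiFace p u) (hs0 : 0 < s) (hs1 : s < 1) :
    s • x + (1 - s) • y ∈ psiFace p (t ∩ u) := by
  obtain ⟨lx, hlx, hsx, rfl⟩ := hx
  obtain ⟨ly, hly, hsy, rfl⟩ := hy
  refine ⟨fun i => s * (if i ∈ tᶜ then lx i else 0) + (1 - s) * (if i ∈ uᶜ then ly i else 0),
    ?_, ?_, ?_⟩
  · intro i hi
    rw [Finset.compl_inter, Finset.mem_union] at hi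
    by_cases h1 : i ∈ tᶜ <;> by_cases h2 : i ∈ uᶜ <;> simp only [h1, h2, if_pos, if_neg,
      if_true, if_false, mul_zero, add_zero, zero_add]
    · have := hlx i h1; have := hly i h2; nlinarith
    · have := hlx i h1; nlinarith
    · have := hly i h2; nlinarith
    · tauto
  · rw [Finset.compl_inter, Finset.sum_add_distrib, ← Finset.mul_sum, ← Finset.mul_sum,
      Finset.sum_ite_mem, Finset.sum_ite_mem, Finset.union_inter_cancel_left,
      Finset.union_inter_cancel_right, hsx, hsy]
    ring
  · rw [Finset.compl_inter]
    simp only [add_smul, mul_smul, Finset.sum_add_distrib, ite_smul, zero_smul,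
      Finset.smul_sum]
    simp only [smul_ite, smul_zero]
    rw [Finset.sum_ite_mem, Finset.sum_ite_mem, Finset.union_inter_cancel_left,
      Finset.union_inter_cancel_right, ← Finset.smul_sum, ← Finset.smul_sum]

open Finset in
lemma psiFace_subset_convexHull_aux {n : ℕ} {p : Fin (n + 1) → EuclideanSpace ℝ (Fin n)}
    (a b : Finset (Fin (n + 1))) :
    psiFace p (a ∩ b) ⊆ convexHull ℝ (psiFace p a ∪ psiFace p b) := by
  by_cases hA : aᶜ = ∅
  · have ha : a = Finset.univ := by rwa [Finset.compl_eq_empty_iff] at hA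
    rw [ha, Finset.univ_inter]
    exact (Set.subset_union_right).trans (subset_convexHull ℝ _)
  by_cases hB : bᶜ = ∅
  · have hb : b = Finset.univ := by rwa [Finset.compl_eq_empty_iff] at hB
    rw [hb, Finset.inter_univ]
    exact (Set.subset_union_left).trans (subset_convexHull ℝ _)
  have hA' : aᶜ.Nonempty := Finset.nonempty_iff_ne_empty.2 hA
  have hB' : bᶜ.Nonempty := Finset.nonempty_iff_ne_empty.2 hB
  rintro x ⟨l, hl, hsum, rfl⟩
  rw [Finset.compl_inter] at hl hsum ⊢
  set α : Fin (n + 1) → ℝ := fun i => if i ∈ bᶜ then l i / 2 else l i with hα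
  set β : Fin (n + 1) → ℝ := fun i => if i ∈ aᶜ then l i / 2 else l i with hβ
  have hαpos : ∀ i ∈ aᶜ, 0 < α i := by
    intro i hi
    have := hl i (Finset.mem_union_left _ hi)
    by_cases h : i ∈ bᶜ <;> simp only [hα, h, if_true, if_false] <;> linarith
  have hβpos : ∀ i ∈ bᶜ, 0 < β i := by
    intro i hi
    have := hl i (Finset.mem_union_right _ hi)
    by_cases h : i ∈ aᶜ <;> simp only [hβ, h, if_true, if_false] <;> linarith
  set s : ℝ := ∑ i ∈ aᶜ, α i with hs
  set sb : ℝ := ∑ i ∈ bᶜ, β i with hsb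
  have hspos : 0 < s := Finset.sum_pos hαpos hA'
  have hsbpos : 0 < sb := Finset.sum_pos hβpos hB'
  have hsplit : s + sb = 1 := by
    rw [hs, hsb]
    have h1 : ∑ i ∈ aᶜ, α i = ∑ i ∈ aᶜ ∪ bᶜ, (if i ∈ aᶜ then α i else 0) := by
      rw [Finset.sum_ite_mem, Finset.union_inter_cancel_left]
    have h2 : ∑ i ∈ bᶜ, β i = ∑ i ∈ aᶜ ∪ bᶜ, (if i ∈ bᶜ then β i else 0) := by
      rw [Finset.sum_ite_mem, Finset.union_inter_cancel_right]
    rw [h1, h2, ← Finset.sum_add_distrib]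
    rw [← hsum]
    refine Finset.sum_congr rfl fun i hi => ?_
    rw [Finset.mem_union] at hi
    by_cases h1 : i ∈ aᶜ <;> by_cases h2 : i ∈ bᶜ <;>
      simp only [hα, hβ, h1, h2, if_true, if_false] <;>
      first | ring1 | exact absurd hi (not_or.2 ⟨h1, h2⟩)
  have hy : (∑ i ∈ aᶜ, (α i / s) • p i) ∈ psiFace p a :=
    ⟨fun i => α i / s, fun i hi => div_pos (hαpos i hi) hspos,
      by rw [← Finset.sum_div, ← hs, div_self hspos.ne'], rfl⟩
  have hz : (∑ i ∈ bᶜ, (β i / sb) • p i) ∈ psiFace p b :=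
    ⟨fun i => β i / sb, fun i hi => div_pos (hβpos i hi) hsbpos,
      by rw [← Finset.sum_div, ← hsb, div_self hsbpos.ne'], rfl⟩
  have key := (convex_convexHull ℝ (psiFace p a ∪ psiFace p b))
    (subset_convexHull ℝ _ (Set.mem_union_left _ hy))
    (subset_convexHull ℝ _ (Set.mem_union_right _ hz)) hspos.le hsbpos.le hsplit
  have heq : s • (∑ i ∈ aᶜ, (α i / s) • p i) + sb • (∑ i ∈ bᶜ, (β i / sb) • p i)
      = ∑ i ∈ aᶜ ∪ bᶜ, l i • p i := by
    rw [Finset.smul_sum, Finset.smul_sum]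
    have h1 : ∀ i, s • ((α i / s) • p i) = α i • p i := fun i => by
      rw [smul_smul, mul_div_cancel₀ _ hspos.ne']
    have h2 : ∀ i, sb • ((β i / sb) • p i) = β i • p i := fun i => by
      rw [smul_smul, mul_div_cancel₀ _ hsbpos.ne']
    simp only [h1, h2]
    have h3 : ∑ i ∈ aᶜ, α i • p i = ∑ i ∈ aᶜ ∪ bᶜ, (if i ∈ aᶜ then α i • p i else 0) := by
      rw [Finset.sum_ite_mem, Finset.union_inter_cancel_left]
    have h4 : ∑ i ∈ bᶜ, β i • p i = ∑ i ∈ aᶜ ∪ bᶜ, (if i ∈ bᶜ then β i • p i else 0) := by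
      rw [Finset.sum_ite_mem, Finset.union_inter_cancel_right]
    rw [h3, h4, ← Finset.sum_add_distrib]
    refine Finset.sum_congr rfl fun i hi => ?_
    rw [Finset.mem_union] at hi
    by_cases h1 : i ∈ aᶜ <;> by_cases h2 : i ∈ bᶜ <;>
      simp only [hα, hβ, h1, h2, if_true, if_false] <;>
      first | module | exact absurd hi (not_or.2 ⟨h1, h2⟩)
  rwa [heq] at key

/-- For the vertices `p` of a nondegenerate simplex in `ℝ^n` and all
`a, b ⊆ {1,...,n+1}`: `conv(ψ(a) ∪ ψ(b)) = ψ(a) ∪ ψ(b) ∪ ψ(a ∩ b)`. -/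
theorem convexHull_psiFace_union {n : ℕ} (p : Fin (n + 1) → EuclideanSpace ℝ (Fin n))
    (hp : AffineIndependent ℝ p) (a b : Finset (Fin (n + 1))) :
    convexHull ℝ (psiFace p a ∪ psiFace p b) =
      psiFace p a ∪ psiFace p b ∪ psiFace p (a ∩ b) := by
  apply Set.Subset.antisymm
  · apply convexHull_min Set.subset_union_left
    intro x hx y hy s1 s2 hs1 hs2 hsum
    rcases eq_or_lt_of_le hs1 with h0 | h0
    · have : s2 = 1 := by linarith
      simp [← h0, this, hy]
    rcases eq_or_lt_of_le hs2 with h0' | h0'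
    · have : s1 = 1 := by linarith
      simp [← h0', this, hx]
    have hlt : s1 < 1 := by linarith
    have hs2' : s2 = 1 - s1 := by linarith
    subst hs2'
    rcases hx with (hx | hx) | hx <;> rcases hy with (hy | hy) | hy <;>
      have key := psiFace_combo hx hy h0 hlt <;>
      first
        | exact Or.inl (Or.inl (by rwa [Finset.inter_self] at key))
        | exact Or.inl (Or.inr (by rwa [Finset.inter_self] at key))
        | exact Or.inr key
        | exact Or.inr (by rwa [Finset.inter_comm] at key)
        | exact Or.inr (by rwa [Finset.inter_self] at key)
        | exact Or.inr (by rwa [← Finset.inter_assoc, Finset.inter_self] at key)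
        | exact Or.inr (by rwa [Finset.inter_left_comm, Finset.inter_self] at key)
        | exact Or.inr (by rwa [Finset.inter_assoc, Finset.inter_self] at key)
        | exact Or.inr (by rwa [Finset.inter_right_comm, Finset.inter_self] at key)
  · refine Set.union_subset (Set.union_subset ?_ ?_) (psiFace_subset_convexHull_aux a b)
    · exact (Set.subset_union_left).trans (subset_convexHull ℝ _)
    · exact (Set.subset_union_right).trans (subset_convexHull ℝ _)
end

section
/- Let S_A be a simplex with affinely independent vertex set {p_i : i ∈ A} in ℝ^{|A|-1}, and for small λ > 0 let S_A^λ be the shrunken homothetic copy with vertices p_i^λ on the segments toward the centroid. For j ∈ A, let S'_{A\{j}} be the face of the truncated polytope T(A,λ,j) parallel to the facet S_{A\{j}} (as constructed via the points p(i,A,j) = [p_i, p_j] ∩ H_{A\{j}}, where H_{A\{j}} is the affine hull of {p_i^λ : i ∈ A, i ≠ j}). Then for each i ∈ A and j ∈ A with j ≠ i: U(A,λ,i) ∩ S'_{A\{j}} = {p(i,A,j)}, where U(A,λ,i) = conv({p_i} ∪ {p(i,A,k) : k ∈ A, k ≠ i}). -/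
/-!
In barycentric coordinates with respect to the simplex, every vertex `pl k` with `k ≠ j` of the
shrunken simplex has `j`-th coordinate `t = (1 - r) / |A|`, so the hyperplane `H_{A\{j}}` is the
level set `{coord j = t}` and `p(i,A,j)` is the point of the edge `[p i, p j]` at parameter `t`.
The `i`-th coordinate is therefore at least `1 - t` on `U(A,λ,i)`, while on the generators of
`S'_{A\{j}}` it is `0`, except at `p(i,A,j)` where it equals `1 - t > 0`; the level `1 - t`
exposes `p(i,A,j)` as the only point of `S'_{A\{j}}` that can lie in `U(A,λ,i)`.
-/

open AffineMap Finset

section ExposedPoint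

variable {𝕜 E : Type*} [Field 𝕜] [LinearOrder 𝕜] [IsStrictOrderedRing 𝕜]
  [AddCommGroup E] [Module 𝕜 E]

theorem convex_setOf_lt_union_singleton (f : E →ᵃ[𝕜] 𝕜) {c : 𝕜} {x₀ : E} (hx₀ : f x₀ ≤ c) :
    Convex 𝕜 ({x | f x < c} ∪ {x₀}) := by
  refine convex_iff_pairwise_pos.2 fun x hx y hy hxy a b ha hb hab => Or.inl ?_
  have hle : ∀ z ∈ ({x | f x < c} ∪ {x₀}), f z ≤ c := by
    rintro z (hz | rfl)
    exacts [hz.le, hx₀]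
  have hlt : f x < c ∨ f y < c := by
    rcases hx with hx | rfl
    · exact .inl hx
    rcases hy with hy | rfl
    · exact .inr hy
    exact absurd rfl hxy
  show f (a • x + b • y) < c
  rw [Convex.combo_affine_apply hab, smul_eq_mul, smul_eq_mul]
  calc a * f x + b * f y < a * c + b * c := by
        rcases hlt with h | h
        · exact add_lt_add_of_lt_of_le (mul_lt_mul_of_pos_left h ha)
            (mul_le_mul_of_nonneg_left (hle y hy) hb.le)
        · exact add_lt_add_of_le_of_lt (mul_le_mul_of_nonneg_left (hle x hx) ha.le)
            (mul_lt_mul_of_pos_left h hb)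
    _ = c := by rw [← add_mul, hab, one_mul]

theorem eq_of_mem_convexHull_of_le_apply {f : E →ᵃ[𝕜] 𝕜} {S : Set E} {c : 𝕜} {x₀ x : E}
    (hS : ∀ y ∈ S, y ≠ x₀ → f y < c) (hx₀ : f x₀ ≤ c) (hx : x ∈ convexHull 𝕜 S)
    (hcx : c ≤ f x) : x = x₀ := by
  have hsub : S ⊆ {y | f y < c} ∪ {x₀} := fun y hy => by
    by_cases h : y = x₀
    exacts [Or.inr h, Or.inl (hS y hy h)]
  rcases convexHull_min hsub (convex_setOf_lt_union_singleton f hx₀) hx with h | h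
  exacts [absurd hcx (not_le.2 h), h]

end ExposedPoint

namespace AffineBasis

variable {𝕜 E ι : Type*} [AddCommGroup E]

section Ring

variable [Ring 𝕜] [Module 𝕜 E] (b : AffineBasis ι 𝕜 E)

theorem coord_lineMap_left {i j : ι} (hij : i ≠ j) (t : 𝕜) :
    b.coord i (lineMap (b i) (b j) t) = 1 - t := by
  rw [apply_lineMap, b.coord_apply_eq, b.coord_apply_ne hij, lineMap_apply_module]
  simp

theorem coord_lineMap_of_ne {i j k : ι} (hki : k ≠ i) (hkj : k ≠ j) (t : 𝕜) :
    b.coord k (lineMap (b i) (b j) t) = 0 := by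
  rw [apply_lineMap, b.coord_apply_ne hki, b.coord_apply_ne hkj, lineMap_same_apply]

end Ring

theorem eq_lineMap_of_mem_segment [CommRing 𝕜] [PartialOrder 𝕜] [IsOrderedRing 𝕜] [Module 𝕜 E]
    (b : AffineBasis ι 𝕜 E) {i j : ι} (hij : i ≠ j) {x : E}
    (hx : x ∈ segment 𝕜 (b i) (b j)) : x = lineMap (b i) (b j) (b.coord j x) := by
  rw [segment_eq_image_lineMap] at hx
  obtain ⟨s, -, rfl⟩ := hx
  rw [apply_lineMap, b.coord_apply_eq, b.coord_apply_ne hij.symm, lineMap_apply_ring', sub_zero,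
    mul_one, add_zero]

section Field

variable [Field 𝕜] [CharZero 𝕜] [Module 𝕜 E] [Fintype ι] (b : AffineBasis ι 𝕜 E)

theorem coord_homothety_centroid_of_ne (r : 𝕜) {j k : ι} (hkj : k ≠ j) :
    b.coord j (homothety (univ.centroid 𝕜 b) r (b k)) = (1 - r) / Fintype.card ι := by
  rw [homothety_eq_lineMap, apply_lineMap, b.coord_apply_centroid (mem_univ j),
    b.coord_apply_ne hkj.symm, lineMap_apply_module, card_univ]
  simp [div_eq_mul_inv]

theorem coord_eq_of_mem_affineSpan_homothety_centroid (r : 𝕜) {j : ι} {x : E}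
    (hx : x ∈ affineSpan 𝕜 ((fun k => homothety (univ.centroid 𝕜 b) r (b k)) '' {k | k ≠ j})) :
    b.coord j x = (1 - r) / Fintype.card ι :=
  eqOn_affineSpan (g := const 𝕜 E ((1 - r) / Fintype.card ι))
    (by rintro _ ⟨k, hk, rfl⟩; exact b.coord_homothety_centroid_of_ne r hk) hx

end Field

end AffineBasis

theorem U_inter_face_eq_singleton_general {m : ℕ} {ι : Type*} [Fintype ι]
    (hcard : Fintype.card ι = m + 1)
    (p : ι → EuclideanSpace ℝ (Fin m)) (hp : AffineIndependent ℝ p)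
    (r : ℝ) (hr : r ∈ Set.Ioo (0 : ℝ) 1)
    (pl : ι → EuclideanSpace ℝ (Fin m))
    (hpl : ∀ i, pl i = AffineMap.homothety (Finset.univ.centroid ℝ p) r (p i))
    (q : ι → ι → EuclideanSpace ℝ (Fin m))
    (hq : ∀ i j, i ≠ j → q i j ∈ segment ℝ (p i) (p j) ∧
      q i j ∈ (affineSpan ℝ (pl '' {k | k ≠ j}) : Set (EuclideanSpace ℝ (Fin m))))
    (i j : ι) (hij : i ≠ j) :
    convexHull ℝ ({p i} ∪ {x | ∃ k, k ≠ i ∧ x = q i k}) ∩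
      convexHull ℝ {x | ∃ i', i' ≠ j ∧ x = q i' j} = {q i j} := by
  let b : AffineBasis ι ℝ (EuclideanSpace ℝ (Fin m)) := ⟨p, hp, by
    rw [hp.affineSpan_eq_top_iff_card_eq_finrank_add_one, hcard, finrank_euclideanSpace_fin]⟩
  obtain rfl : pl = fun k => homothety (univ.centroid ℝ b) r (b k) := funext hpl
  set t : ℝ := (1 - r) / Fintype.card ι
  have hcard_one : (1 : ℝ) ≤ Fintype.card ι := Nat.one_le_cast.2 (Fintype.card_pos_iff.2 ⟨i⟩)
  have hcard_pos : (0 : ℝ) < Fintype.card ι := zero_lt_one.trans_le hcard_one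
  have ht : 0 ≤ t ∧ t < 1 :=
    ⟨div_nonneg (by linarith [hr.2]) hcard_pos.le, (div_lt_one hcard_pos).2 (by linarith [hr.1])⟩
  have hq_eq : ∀ a c, a ≠ c → q a c = lineMap (b a) (b c) t := fun a c hac =>
    (b.eq_lineMap_of_mem_segment hac (hq a c hac).1).trans
      (by rw [b.coord_eq_of_mem_affineSpan_homothety_centroid r (hq a c hac).2])
  have hU : ∀ x ∈ convexHull ℝ ({p i} ∪ {x | ∃ k, k ≠ i ∧ x = q i k}), 1 - t ≤ b.coord i x := by
    refine fun x hx => convexHull_min ?_ ((convex_Ici _).affine_preimage (b.coord i)) hx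
    rintro _ (rfl | ⟨k, hki, rfl⟩)
    · exact (sub_le_self _ ht.1).trans_eq (b.coord_apply_eq i).symm
    · exact (hq_eq i k hki.symm ▸ b.coord_lineMap_left hki.symm t).ge
  refine Set.Subset.antisymm (fun x ⟨hxU, hxF⟩ => ?_) ?_
  · refine eq_of_mem_convexHull_of_le_apply ?_ ?_ hxF (hU x hxU)
    · rintro _ ⟨i', hi'j, rfl⟩ hne
      have hi'i : i ≠ i' := fun h => hne (h ▸ rfl)
      rw [hq_eq i' j hi'j, b.coord_lineMap_of_ne hi'i hij]
      linarith [ht.2]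
    · rw [hq_eq i j hij, b.coord_lineMap_left hij]
  · rintro _ rfl
    exact ⟨subset_convexHull ℝ _ (Or.inr ⟨j, hij.symm, rfl⟩), subset_convexHull ℝ _ ⟨i, hij, rfl⟩⟩

/-- Let `{p i : i ∈ A}` be the affinely independent vertex set of a simplex `S_A` in
`ℝ^{|A|-1}`, let `S_A^λ` be the shrunken homothetic copy with vertices `pl i` on the
segments toward the centroid, and for distinct `i, j` let `q i j = p(i,A,j)` be the point
of `[p i, p j]` lying on the affine hull `H_{A\{j}}` of `{pl k : k ≠ j}`. Then for all
`i ≠ j`, `U(A,λ,i) ∩ S'_{A\{j}} = {q i j}`, where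
`U(A,λ,i) = conv({p i} ∪ {q i k : k ≠ i})` and `S'_{A\{j}} = conv{q i' j : i' ≠ j}`. -/
theorem U_inter_face_eq_singleton {m : ℕ} {ι : Type*} [Fintype ι] [DecidableEq ι]
    (hcard : Fintype.card ι = m + 1)
    (p : ι → EuclideanSpace ℝ (Fin m)) (hp : AffineIndependent ℝ p)
    (r : ℝ) (hr : r ∈ Set.Ioo (0 : ℝ) 1)
    (pl : ι → EuclideanSpace ℝ (Fin m))
    (hpl : ∀ i, pl i = AffineMap.homothety (Finset.univ.centroid ℝ p) r (p i))
    (q : ι → ι → EuclideanSpace ℝ (Fin m))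
    (hq : ∀ i j, i ≠ j → q i j ∈ segment ℝ (p i) (p j) ∧
      q i j ∈ (affineSpan ℝ (pl '' {k | k ≠ j}) : Set (EuclideanSpace ℝ (Fin m))))
    (i j : ι) (hij : i ≠ j) :
    convexHull ℝ ({p i} ∪ {x | ∃ k, k ≠ i ∧ x = q i k}) ∩
      convexHull ℝ {x | ∃ i', i' ≠ j ∧ x = q i' j} = {q i j} :=
  U_inter_face_eq_singleton_general hcard p hp r hr pl hpl q hq i j hij
end

section
/- With the notation above, if for each i ∈ A a point q_i is chosen in U(A,λ,i) \ {p(i,A,j) : j ∈ A, j ≠ i}, then the shrunken simplex S_A^λ is contained in the (relative) interior of conv{q_i : i ∈ A}. -/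
open Finset

private lemma core_pos {ι : Type*} [Fintype ι] [DecidableEq ι] {m : ℕ}
    (hcard : Fintype.card ι = m + 1) {s : ℝ} (hs : 0 < s) (hms : ((m : ℝ) + 1) * s < 1)
    (β : ι → ι → ℝ) (hβ0 : ∀ i k, 0 ≤ β i k) (hβd : ∀ i, 1 - s ≤ β i i)
    (hβs : ∀ i k, i ≠ k → β i k < s)
    (w : ι → ℝ) (hw : ∀ k, s ≤ w k)
    (l : ι → ℝ) (hl : ∑ i, l i = 1) (hrel : ∀ k, ∑ i, l i * β i k = w k) :
    ∀ k, 0 < l k := by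
  have hm1 : (1 : ℝ) ≤ (m : ℝ) + 1 := by
    have := Nat.cast_nonneg (α := ℝ) m; linarith
  have hs1 : s < 1 := lt_of_le_of_lt (le_mul_of_one_le_left hs.le hm1) hms
  -- Step A : nonnegativity
  have h0 : ∀ k, 0 ≤ l k := by
    by_contra hcon
    push_neg at hcon
    obtain ⟨k0, hk0⟩ := hcon
    set N : Finset ι := univ.filter (fun k => l k < 0) with hN
    have hk0N : k0 ∈ N := by simp [hN, hk0]
    set Sneg : ℝ := ∑ k ∈ N, (-l k) with hSneg
    have hSneg_pos : 0 < Sneg := by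
      refine Finset.sum_pos (fun k hk => ?_) ⟨k0, hk0N⟩
      have hk2 := (mem_filter.mp hk).2
      linarith
    have hplus : ∑ i, max (l i) 0 = 1 + Sneg := by
      have : ∀ i, max (l i) 0 = l i + max (-l i) 0 := by
        intro i; rcases le_or_gt 0 (l i) with h | h
        · rw [max_eq_left h, max_eq_right (by linarith), add_zero]
        · rw [max_eq_right h.le, max_eq_left (by linarith)]; ring
      rw [Finset.sum_congr rfl (fun i _ => this i), Finset.sum_add_distrib, hl]
      congr 1
      rw [hSneg, ← Finset.sum_filter_add_sum_filter_not univ (fun k => l k < 0)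
        (fun i => max (-l i) 0)]
      have h1 : ∑ i ∈ univ.filter (fun k => l k < 0), max (-l i) 0 = ∑ k ∈ N, (-l k) := by
        refine Finset.sum_congr (by rw [hN]) (fun i hi => ?_)
        have hi2 := (mem_filter.mp hi).2
        exact max_eq_left (by linarith)
      have h2 : ∑ i ∈ univ.filter (fun k => ¬ l k < 0), max (-l i) 0 = 0 := by
        refine Finset.sum_eq_zero (fun i hi => ?_)
        have hi2 : ¬ l i < 0 := (mem_filter.mp hi).2
        push_neg at hi2
        exact max_eq_right (by linarith)
      rw [h1, h2, add_zero]
    have key : ∀ k ∈ N, (1 - s) * (-l k) ≤ s * Sneg := by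
      intro k hk
      have hlk : l k < 0 := by
        rw [hN] at hk; exact (mem_filter.mp hk).2
      have hsplit : l k * β k k + ∑ i ∈ univ.erase k, l i * β i k = w k := by
        rw [← hrel k]
        exact Finset.add_sum_erase univ (fun i => l i * β i k) (mem_univ k)
      have hterm : ∀ i ∈ univ.erase k, l i * β i k ≤ max (l i) 0 * s := by
        intro i hi
        have hik : i ≠ k := (Finset.mem_erase.mp hi).1
        rcases le_or_gt 0 (l i) with h | h
        · rw [max_eq_left h]
          exact mul_le_mul_of_nonneg_left (hβs i k hik).le h
        · rw [max_eq_right h.le, zero_mul]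
          exact mul_nonpos_of_nonpos_of_nonneg h.le (hβ0 i k)
      have hsum1 : ∑ i ∈ univ.erase k, l i * β i k ≤ ∑ i ∈ univ.erase k, max (l i) 0 * s :=
        Finset.sum_le_sum hterm
      have hsum2 : ∑ i ∈ univ.erase k, max (l i) 0 * s ≤ ∑ i, max (l i) 0 * s := by
        refine Finset.sum_le_sum_of_subset_of_nonneg (Finset.erase_subset _ _) ?_
        intro i _ _
        exact mul_nonneg (le_max_right _ _) hs.le
      have hsum3 : ∑ i, max (l i) 0 * s = (1 + Sneg) * s := by
        rw [← Finset.sum_mul, hplus]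
      have hdiag : l k * β k k ≤ l k * (1 - s) :=
        mul_le_mul_of_nonpos_left (hβd k) hlk.le
      have := hw k
      nlinarith [hsplit, hsum1, hsum2, hsum3, hdiag, this]
    have hsumN : (1 - s) * Sneg ≤ (N.card : ℝ) * (s * Sneg) := by
      calc (1 - s) * Sneg = ∑ k ∈ N, (1 - s) * (-l k) := by rw [hSneg, Finset.mul_sum]
        _ ≤ ∑ _k ∈ N, s * Sneg := Finset.sum_le_sum key
        _ = (N.card : ℝ) * (s * Sneg) := by rw [Finset.sum_const, nsmul_eq_mul]
    have hNcard : (N.card : ℝ) ≤ (m : ℝ) := by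
      have hne : N ≠ univ := by
        intro h
        have : ∑ k ∈ N, l k < 0 := by
          refine Finset.sum_neg (fun k hk => ?_) ⟨k0, hk0N⟩
          rw [hN] at hk; exact (mem_filter.mp hk).2
        rw [h, hl] at this; linarith
      have : N.card < Fintype.card ι :=
        Finset.card_lt_card (Finset.ssubset_univ_iff.mpr hne)
      rw [hcard] at this
      exact_mod_cast Nat.lt_succ_iff.mp this
    have h1 : (1 - s) * Sneg ≤ ((m : ℝ) * s) * Sneg := by
      have := mul_le_mul_of_nonneg_right hNcard (mul_nonneg hs.le hSneg_pos.le)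
      nlinarith [hsumN]
    have h2 : 1 - s ≤ (m : ℝ) * s := le_of_mul_le_mul_right h1 hSneg_pos
    linarith
  -- Step B : strict positivity
  intro k
  rcases (h0 k).lt_or_eq with h | h
  · exact h
  · exfalso
    have hsum' : ∑ i ∈ univ.erase k, l i = 1 := by
      have h2 : l k + ∑ x ∈ univ.erase k, l x = ∑ x : ι, l x :=
        Finset.add_sum_erase univ l (mem_univ k)
      rw [← h, zero_add] at h2
      rw [h2, hl]
    obtain ⟨i0, hi0, hi0pos⟩ : ∃ i ∈ univ.erase k, 0 < l i := by
      by_contra hcon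
      push_neg at hcon
      have : ∑ i ∈ univ.erase k, l i ≤ 0 := Finset.sum_nonpos hcon
      rw [hsum'] at this; linarith
    have hlt : ∑ i ∈ univ.erase k, l i * β i k < ∑ i ∈ univ.erase k, l i * s := by
      refine Finset.sum_lt_sum (fun i hi => ?_) ⟨i0, hi0, ?_⟩
      · exact mul_le_mul_of_nonneg_left (hβs i k (Finset.mem_erase.mp hi).1).le (h0 i)
      · exact mul_lt_mul_of_pos_left (hβs i0 k (Finset.mem_erase.mp hi0).1) hi0pos
    have : w k < s := by
      have hsp : l k * β k k + ∑ x ∈ univ.erase k, l x * β x k = ∑ x : ι, l x * β x k :=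
        Finset.add_sum_erase univ (fun i => l i * β i k) (mem_univ k)
      rw [← h, zero_mul, zero_add] at hsp
      rw [← hrel k, ← hsp]
      calc ∑ i ∈ univ.erase k, l i * β i k < ∑ i ∈ univ.erase k, l i * s := hlt
        _ = s := by rw [← Finset.sum_mul, hsum', one_mul]
    linarith [hw k]

private lemma core_inj {ι : Type*} [Fintype ι] [DecidableEq ι] {m : ℕ}
    (hcard : Fintype.card ι = m + 1) {s : ℝ} (hs : 0 < s) (hms : ((m : ℝ) + 1) * s < 1)
    (β : ι → ι → ℝ) (hβ0 : ∀ i k, 0 ≤ β i k) (hβd : ∀ i, 1 - s ≤ β i i)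
    (hβs : ∀ i k, i ≠ k → β i k < s)
    (u : ι → ℝ) (hrel : ∀ k, ∑ i, u i * β i k = 0) :
    ∀ i, u i = 0 := by
  have hm1 : (1 : ℝ) ≤ (m : ℝ) + 1 := by
    have := Nat.cast_nonneg (α := ℝ) m; linarith
  have hs1 : s < 1 := lt_of_le_of_lt (le_mul_of_one_le_left hs.le hm1) hms
  by_contra hcon
  push_neg at hcon
  obtain ⟨i1, hi1⟩ := hcon
  have hne : (univ : Finset ι).Nonempty := ⟨i1, mem_univ i1⟩
  obtain ⟨k, -, hk⟩ := Finset.exists_max_image univ (fun i => |u i|) hne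
  have hukpos : 0 < |u k| := lt_of_lt_of_le (abs_pos.mpr hi1) (hk i1 (mem_univ i1))
  have heq : u k * β k k = -∑ i ∈ univ.erase k, u i * β i k := by
    have hsp : u k * β k k + ∑ x ∈ univ.erase k, u x * β x k = ∑ x : ι, u x * β x k :=
      Finset.add_sum_erase univ (fun i => u i * β i k) (mem_univ k)
    have h' := hrel k
    rw [← hsp] at h'
    linarith
  have hcard_erase : (univ.erase k).card = m := by
    rw [Finset.card_erase_of_mem (mem_univ k), Finset.card_univ, hcard]
    omega
  have habs : |u k| * (1 - s) ≤ |u k| * ((m : ℝ) * s) := by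
    have h1 : |u k| * (1 - s) ≤ |u k * β k k| := by
      rw [abs_mul, abs_of_nonneg (hβ0 k k)]
      exact mul_le_mul_of_nonneg_left (hβd k) (abs_nonneg _)
    have h2 : |u k * β k k| ≤ ∑ i ∈ univ.erase k, |u i| * β i k := by
      rw [heq, abs_neg]
      refine le_trans (Finset.abs_sum_le_sum_abs _ _) (le_of_eq ?_)
      refine Finset.sum_congr rfl (fun i _ => ?_)
      rw [abs_mul, abs_of_nonneg (hβ0 i k)]
    have h3 : ∑ i ∈ univ.erase k, |u i| * β i k ≤ ∑ i ∈ univ.erase k, |u k| * β i k := by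
      refine Finset.sum_le_sum (fun i _ => ?_)
      exact mul_le_mul_of_nonneg_right (hk i (mem_univ i)) (hβ0 i k)
    have h4 : ∑ i ∈ univ.erase k, |u k| * β i k ≤ ∑ i ∈ univ.erase k, |u k| * s := by
      refine Finset.sum_le_sum (fun i hi => ?_)
      exact mul_le_mul_of_nonneg_left (hβs i k (Finset.mem_erase.mp hi).1).le (abs_nonneg _)
    have h5 : ∑ i ∈ univ.erase k, |u k| * s = |u k| * ((m : ℝ) * s) := by
      rw [Finset.sum_const, hcard_erase, nsmul_eq_mul]; ring
    linarith
  have : (1 - s) ≤ (m : ℝ) * s := le_of_mul_le_mul_left (by linarith [habs]) hukpos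
  nlinarith
set_option maxHeartbeats 1600000 in
/-- With the notation of the construction (simplex `S_A` with affinely independent
vertices `p i` spanning `ℝ^{|A|-1}`, shrunken copy `S_A^λ` with vertices `pl i`,
points `q i j = p(i,A,j)` and corner polytopes `U(A,λ,i) = conv({p i} ∪ {q i k : k ≠ i})`):
if for each `i` a point `q' i` is chosen in `U(A,λ,i) \ {q i j : j ≠ i}`, then the
shrunken simplex `S_A^λ = conv{pl i}` is contained in the interior of
`conv{q' i : i ∈ A}`. -/
theorem shrunken_simplex_subset_interior {m : ℕ} {ι : Type*} [Fintype ι] [DecidableEq ι]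
    (hcard : Fintype.card ι = m + 1)
    (p : ι → EuclideanSpace ℝ (Fin m)) (hp : AffineIndependent ℝ p)
    (r : ℝ) (hr : r ∈ Set.Ioo (0 : ℝ) 1)
    (pl : ι → EuclideanSpace ℝ (Fin m))
    (hpl : ∀ i, pl i = AffineMap.homothety (Finset.univ.centroid ℝ p) r (p i))
    (q : ι → ι → EuclideanSpace ℝ (Fin m))
    (hq : ∀ i j, i ≠ j → q i j ∈ segment ℝ (p i) (p j) ∧
      q i j ∈ (affineSpan ℝ (pl '' {k | k ≠ j}) : Set (EuclideanSpace ℝ (Fin m))))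
    (q' : ι → EuclideanSpace ℝ (Fin m))
    (hq' : ∀ i, q' i ∈ convexHull ℝ ({p i} ∪ {x | ∃ k, k ≠ i ∧ x = q i k}) ∧
      ∀ j, j ≠ i → q' i ≠ q i j) :
    convexHull ℝ (Set.range pl) ⊆ interior (convexHull ℝ (Set.range q')) := by
  classical
  obtain ⟨hr0, hr1⟩ := hr
  have hm0 : (0:ℝ) ≤ (m:ℝ) := Nat.cast_nonneg m
  have hm1 : (0:ℝ) < (m:ℝ) + 1 := by linarith
  set s : ℝ := (1 - r) / ((m:ℝ) + 1) with hsdef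
  have hs0 : 0 < s := div_pos (by linarith) hm1
  have hsm : ((m:ℝ)+1) * s = 1 - r := by
    rw [hsdef, mul_div_cancel₀ _ (ne_of_gt hm1)]
  have hms : ((m:ℝ)+1) * s < 1 := by rw [hsm]; linarith
  have hs1 : s < 1 := by nlinarith
  have hspan : affineSpan ℝ (Set.range p) = ⊤ := by
    rw [hp.affineSpan_eq_top_iff_card_eq_finrank_add_one, hcard, finrank_euclideanSpace_fin]
  let B : AffineBasis ι ℝ (EuclideanSpace ℝ (Fin m)) := ⟨p, hp, hspan⟩
  -- weights of the shrunken vertices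
  have hplw : ∀ j : ι, ∑ k : ι, (s + if k = j then r else 0) = 1 := by
    intro j
    rw [Finset.sum_add_distrib, Finset.sum_const, Finset.card_univ, hcard,
      Finset.sum_ite_eq' univ j fun _ => r]
    simp only [Finset.mem_univ, if_true, nsmul_eq_mul]
    push_cast
    linarith [hsm]
  have hplc : ∀ j, pl j = Finset.univ.affineCombination ℝ p
      (fun k => s + if k = j then r else 0) := by
    intro j
    have hnι : Nonempty ι := Fintype.card_pos_iff.mp (by omega)
    have hcne : ((Finset.univ : Finset ι).card : ℝ) ≠ 0 := by
      rw [Finset.card_univ, hcard]; positivity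
    have hc : Finset.univ.centroid ℝ p = ∑ k : ι, (((m:ℝ)+1)⁻¹) • p k := by
      rw [Finset.centroid_def, Finset.affineCombination_eq_linear_combination _ _ _
        (Finset.sum_centroidWeights_eq_one_of_cast_card_ne_zero _ hcne)]
      refine Finset.sum_congr rfl fun k _ => ?_
      rw [Finset.centroidWeights_apply, Finset.card_univ, hcard]
      push_cast
      rfl
    rw [Finset.affineCombination_eq_linear_combination _ _ _ (hplw j), hpl j,
      AffineMap.homothety_apply, hc]
    have hite : ∀ k : ι, (s + if k = j then r else 0) • p k
        = s • p k + (if k = j then r • p k else 0) := by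
      intro k; split <;> simp [add_smul]
    rw [Finset.sum_congr rfl fun k _ => hite k, Finset.sum_add_distrib,
      Finset.sum_ite_eq' univ j fun k => r • p k]
    simp only [Finset.mem_univ, if_true]
    rw [vsub_eq_sub, vadd_eq_add, smul_sub, Finset.smul_sum]
    have h5 : ∀ k : ι, r • (((m:ℝ)+1)⁻¹ • p k) = (r * ((m:ℝ)+1)⁻¹) • p k :=
      fun k => smul_smul _ _ _
    rw [Finset.sum_congr rfl fun k _ => h5 k]
    have h6 : ∀ k : ι, s • p k
        = ((m:ℝ)+1)⁻¹ • p k - (r * ((m:ℝ)+1)⁻¹) • p k := by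
      intro k
      rw [← sub_smul]
      congr 1
      rw [hsdef]
      field_simp
    rw [Finset.sum_congr rfl fun k _ => h6 k, Finset.sum_sub_distrib]
    abel
  have hplcoord : ∀ j k, B.coord k (pl j) = s + if k = j then r else 0 := by
    intro j k
    rw [hplc j]
    exact B.coord_apply_combination_of_mem (Finset.mem_univ k) (hplw j)
  have hpcoord : ∀ k i, B.coord k (p i) = if k = i then 1 else 0 := by
    intro k i
    exact B.coord_apply k i
  -- points of the affine hyperplane spanned by the pl k, k ≠ j
  have hplane : ∀ (j : ι) x, x ∈ (affineSpan ℝ (pl '' {k | k ≠ j})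
      : Set (EuclideanSpace ℝ (Fin m))) → B.coord j x = s := by
    intro j x hx
    have hsub : affineSpan ℝ (pl '' {k | k ≠ j}) ≤
        (affineSpan ℝ ({s} : Set ℝ)).comap (B.coord j) := by
      rw [affineSpan_le]
      rintro y ⟨k, hk, rfl⟩
      have hkj : k ≠ j := hk
      have : B.coord j (pl k) = s := by
        rw [hplcoord k j, if_neg (Ne.symm hkj), add_zero]
      rw [AffineSubspace.coe_comap, Set.mem_preimage, this]
      exact (AffineSubspace.mem_affineSpan_singleton ℝ _ : _ ↔ _).mpr rfl
    have hmem : B.coord j x ∈ affineSpan ℝ ({s} : Set ℝ) := hsub hx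
    exact (AffineSubspace.mem_affineSpan_singleton ℝ _ : _ ↔ _).mp hmem
  -- coordinates of the points q i j
  have hqcoord : ∀ i j, i ≠ j → ∀ k, B.coord k (q i j)
      = (1 - s) * (if k = i then 1 else 0) + s * (if k = j then 1 else 0) := by
    intro i j hij
    obtain ⟨a, b, ha, hb, hab, habe⟩ := (hq i j hij).1
    set wseg : ι → ℝ := fun k => a * (if k = i then 1 else 0) + b * (if k = j then 1 else 0)
      with hwseg
    have hwsum : ∑ k : ι, wseg k = 1 := by
      rw [hwseg]
      simp only []
      rw [Finset.sum_add_distrib, ← Finset.mul_sum, ← Finset.mul_sum,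
        Finset.sum_ite_eq' univ i fun _ => (1:ℝ), Finset.sum_ite_eq' univ j fun _ => (1:ℝ)]
      simp only [Finset.mem_univ, if_true, mul_one]
      exact hab
    have hqc : q i j = Finset.univ.affineCombination ℝ p wseg := by
      rw [Finset.affineCombination_eq_linear_combination _ _ _ hwsum, ← habe]
      have : ∀ k : ι, wseg k • p k
          = (if k = i then a • p k else 0) + (if k = j then b • p k else 0) := by
        intro k
        rw [hwseg]
        simp only []
        by_cases h1 : k = i
        · by_cases h2 : k = j
          · exact absurd (h1.symm.trans h2) hij
          · simp [h1, h2, add_smul]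
        · by_cases h2 : k = j
          · simp [h1, h2, add_smul]
          · simp [h1, h2]
      rw [Finset.sum_congr rfl fun k _ => this k, Finset.sum_add_distrib,
        Finset.sum_ite_eq' univ i fun k => a • p k, Finset.sum_ite_eq' univ j fun k => b • p k]
      simp only [Finset.mem_univ, if_true]
    have hcoordw : ∀ k, B.coord k (q i j) = wseg k := by
      intro k
      rw [hqc]
      exact B.coord_apply_combination_of_mem (Finset.mem_univ k) hwsum
    have hbs : b = s := by
      have h1 := hplane j (q i j) (hq i j hij).2
      rw [hcoordw j, hwseg] at h1
      simpa [hij.symm] using h1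
    have has : a = 1 - s := by rw [← hbs]; linarith
    intro k
    rw [hcoordw k, hwseg, has, hbs]
  -- barycentric coordinates of the chosen points q' i
  set β : ι → ι → ℝ := fun i k => B.coord k (q' i) with hβ
  have hmemim : ∀ i k, β i k ∈ convexHull ℝ
      ((B.coord k) '' ({p i} ∪ {x | ∃ k', k' ≠ i ∧ x = q i k'})) := by
    intro i k
    rw [← AffineMap.image_convexHull]
    exact Set.mem_image_of_mem _ (hq' i).1
  have hβoff : ∀ i k, k ≠ i → β i k ∈ Set.Icc (0:ℝ) s := by
    intro i k hki
    refine convexHull_min ?_ (convex_Icc 0 s) (hmemim i k)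
    rintro y ⟨x, hx, rfl⟩
    rcases hx with hx | ⟨k', hk', rfl⟩
    · rw [Set.mem_singleton_iff] at hx
      rw [hx, hpcoord k i, if_neg hki]
      exact ⟨le_refl 0, hs0.le⟩
    · rw [hqcoord i k' (Ne.symm hk') k, if_neg hki, Set.mem_Icc]
      rcases eq_or_ne k k' with h2 | h2
      · rw [if_pos h2]
        constructor <;> nlinarith
      · rw [if_neg h2]
        constructor <;> nlinarith
  have hβdiag : ∀ i, β i i ∈ Set.Icc (1-s) 1 := by
    intro i
    refine convexHull_min ?_ (convex_Icc (1-s) 1) (hmemim i i)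
    rintro y ⟨x, hx, rfl⟩
    rcases hx with hx | ⟨k', hk', rfl⟩
    · rw [Set.mem_singleton_iff] at hx
      rw [hx, hpcoord i i, if_pos rfl]
      exact ⟨by linarith, le_refl 1⟩
    · rw [hqcoord i k' (Ne.symm hk') i, if_pos rfl, if_neg (Ne.symm hk'), Set.mem_Icc]
      constructor <;> nlinarith
  have hβ0 : ∀ i k, 0 ≤ β i k := by
    intro i k
    by_cases h : k = i
    · rw [h]; linarith [(hβdiag i).1]
    · exact (hβoff i k h).1
  -- strict bound away from the excluded vertices
  have hβstrict : ∀ i k, k ≠ i → β i k < s := by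
    intro i k hki
    rcases lt_or_eq_of_le (hβoff i k hki).2 with h | heq
    · exact h
    exfalso
    set v : ι → EuclideanSpace ℝ (Fin m) := fun l => if l = i then p i else q i l with hv
    have hSv : ({p i} ∪ {x | ∃ k', k' ≠ i ∧ x = q i k'}
        : Set (EuclideanSpace ℝ (Fin m))) = Set.range v := by
      ext x
      constructor
      · rintro (hx | ⟨k', hk', rfl⟩)
        · rw [Set.mem_singleton_iff] at hx
          exact ⟨i, by rw [hv]; simp [hx]⟩
        · exact ⟨k', by rw [hv]; simp [hk']⟩
      · rintro ⟨l, rfl⟩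
        by_cases hl : l = i
        · left; rw [hv]; simp [hl]
        · right; exact ⟨l, hl, by rw [hv]; simp [hl]⟩
    have him := (hq' i).1
    rw [hSv, convexHull_range_eq_exists_affineCombination] at him
    obtain ⟨t, wt, hw0, hw1, hcomb⟩ := him
    have hcoordv : ∀ l, B.coord k (v l) = if l = k then s else 0 := by
      intro l
      by_cases hl : l = i
      · have hvl : v l = p i := by rw [hv]; simp [hl]
        rw [hvl, hpcoord k i, if_neg hki, if_neg (fun h => hki (h.symm.trans hl))]
      · have hvl : v l = q i l := by rw [hv]; simp [hl]
        rw [hvl, hqcoord i l (Ne.symm hl) k, if_neg hki]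
        rcases eq_or_ne k l with h2 | h2
        · rw [if_pos h2, if_pos h2.symm]
          ring
        · rw [if_neg h2, if_neg (Ne.symm h2)]
          ring
    have hval : B.coord k (q' i) = ∑ l ∈ t, wt l * (if l = k then s else 0) := by
      rw [← hcomb, Finset.map_affineCombination t v wt hw1 (B.coord k),
        Finset.affineCombination_eq_linear_combination _ _ _ hw1]
      exact Finset.sum_congr rfl fun l _ => by
        rw [Function.comp_apply, hcoordv l, smul_eq_mul]
    have hite : ∀ l, wt l * (if l = k then s else 0) = if l = k then wt k * s else 0 := by
      intro l
      by_cases h : l = k <;> simp [h]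
    rw [Finset.sum_congr rfl fun l _ => hite l, Finset.sum_ite_eq' t k fun _ => wt k * s]
      at hval
    have heq' : β i k = B.coord k (q' i) := rfl
    rw [heq', hval] at heq
    by_cases hkt : k ∈ t
    · rw [if_pos hkt] at heq
      have hwk : wt k = 1 :=
        mul_right_cancel₀ (ne_of_gt hs0) (heq.trans (one_mul s).symm)
      have hrest : ∀ l ∈ t.erase k, wt l = 0 := by
        have hsum0 : ∑ l ∈ t.erase k, wt l = 0 := by
          have h2 : wt k + ∑ l ∈ t.erase k, wt l = ∑ l ∈ t, wt l :=
            Finset.add_sum_erase t wt hkt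
          rw [hw1, hwk] at h2
          linarith
        intro l hl
        have := (Finset.sum_eq_zero_iff_of_nonneg
          (fun l hl => hw0 l (Finset.mem_of_mem_erase hl))).mp hsum0
        exact this l hl
      have hq'val : q' i = v k := by
        rw [← hcomb, Finset.affineCombination_eq_linear_combination _ _ _ hw1]
        rw [Finset.sum_eq_single_of_mem k hkt]
        · rw [hwk, one_smul]
        · intro l hl hlk
          rw [hrest l (Finset.mem_erase.mpr ⟨hlk, hl⟩), zero_smul]
      have : q' i = q i k := by
        rw [hq'val, hv]
        simp [hki]
      exact (hq' i).2 k hki this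
    · rw [if_neg hkt] at heq
      exact (ne_of_gt hs0) heq.symm
  -- the chosen points are affinely independent
  have hβstrict' : ∀ i k, i ≠ k → (fun i k => β i k) i k < s := fun i k h =>
    hβstrict i k (Ne.symm h)
  have hrelmap : ∀ (x : EuclideanSpace ℝ (Fin m)) (u : ι → ℝ), (∑ i, u i = 0) →
      (∑ i, u i • q' i = 0) → ∀ k, ∑ i, u i * β i k = 0 := by
    intro x u hu0 huv k
    have hdecomp : ∀ y, B.coord k y = (B.coord k).linear y + B.coord k 0 := by
      intro y
      conv_lhs => rw [show y = y +ᵥ (0 : EuclideanSpace ℝ (Fin m)) by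
        rw [vadd_eq_add, add_zero]]
      rw [AffineMap.map_vadd, vadd_eq_add]
    have h1 : ∑ i, u i * ((B.coord k).linear (q' i)) = 0 := by
      have : ∀ i, u i * ((B.coord k).linear (q' i)) = (B.coord k).linear (u i • q' i) := by
        intro i
        rw [map_smul, smul_eq_mul]
      rw [Finset.sum_congr rfl fun i _ => this i, ← map_sum, huv, map_zero]
    calc ∑ i, u i * β i k
        = ∑ i, (u i * ((B.coord k).linear (q' i)) + u i * B.coord k 0) := by
          refine Finset.sum_congr rfl fun i _ => ?_
          rw [hβ]
          simp only []
          rw [hdecomp (q' i)]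
          ring
      _ = ∑ i, u i * ((B.coord k).linear (q' i)) + (∑ i, u i) * B.coord k 0 := by
          rw [Finset.sum_add_distrib, Finset.sum_mul]
      _ = 0 := by rw [h1, hu0]; ring
  have hq'ind : AffineIndependent ℝ q' := by
    rw [affineIndependent_iff_of_fintype]
    intro u hu0 huv
    have huv' : ∑ i, u i • q' i = 0 := by
      rwa [Finset.weightedVSub_eq_linear_combination _ hu0] at huv
    exact core_inj hcard hs0 hms (fun i k => β i k) hβ0
      (fun i => (hβdiag i).1) hβstrict' u (hrelmap 0 u hu0 huv')
  have hq'span : affineSpan ℝ (Set.range q') = ⊤ := by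
    rw [hq'ind.affineSpan_eq_top_iff_card_eq_finrank_add_one, hcard,
      finrank_euclideanSpace_fin]
  let B' : AffineBasis ι ℝ (EuclideanSpace ℝ (Fin m)) := ⟨q', hq'ind, hq'span⟩
  -- conclusion
  have hint : interior (convexHull ℝ (Set.range q')) = {x | ∀ i, 0 < B'.coord i x} :=
    B'.interior_convexHull
  refine convexHull_min ?_ (convex_convexHull ℝ _).interior
  rintro x ⟨j, rfl⟩
  rw [hint]
  intro i
  have hl1 : ∑ i, B'.coord i (pl j) = 1 := B'.sum_coord_apply_eq_one (pl j)
  have hself : Finset.univ.affineCombination ℝ q' (fun i => B'.coord i (pl j)) = pl j :=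
    B'.affineCombination_coord_eq_self (pl j)
  have hrel : ∀ k, ∑ i, B'.coord i (pl j) * β i k = s + if k = j then r else 0 := by
    intro k
    have h2 : B.coord k (pl j) = ∑ i, B'.coord i (pl j) * β i k := by
      conv_lhs => rw [← hself]
      rw [Finset.map_affineCombination univ q' _ hl1 (B.coord k),
        Finset.affineCombination_eq_linear_combination _ _ _ hl1]
      simp only [hβ, Function.comp_apply, smul_eq_mul]
    rw [← hplcoord j k, h2]
  exact core_pos hcard hs0 hms (fun i k => β i k) hβ0 (fun i => (hβdiag i).1) hβstrict'
    (fun k => s + if k = j then r else 0)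
    (fun k => by by_cases h : k = j <;> simp [h] <;> linarith)
    (fun i => B'.coord i (pl j)) hl1 hrel i
end
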